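/- arXiv:1705.05821 — 5 statements merged into one kernel-verified Lean document; each statement's English description precedes it below -/
import Mathlib

section
/- Given a family of κ-Kurepa trees (T_i)_{i<μ} indexed by μ ≤ κ, where T_i has exactly κ_i cofinal branches, there exists a κ-Kurepa tree with exactly sup_{i<μ} κ_i cofinal branches. -/
open Cardinal

/-- A set-theoretic tree: a transitive well-founded relation in which the
predecessors of any element are linearly ordered. -/
structure STree : Type 1 where
  σ : Type
  lt : σ → σ → Prop
  lt_trans : ∀ a b c, lt a b → lt b c → lt a c
  wf : WellFounded lt
  pred_linear : ∀ c a b, lt a c → lt b c → a = b ∨ lt a b ∨ lt b a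

/-- The level (rank) of a node of a tree. -/
noncomputable def STree.rank (T : STree) (x : T.σ) : Ordinal := (T.wf.apply x).rank

/-- A cofinal branch of height `κ`: a downward-closed chain meeting every level below `κ.ord`. -/
def STree.IsCofBranch (T : STree) (κ : Cardinal) (B : Set T.σ) : Prop :=
  (∀ x ∈ B, ∀ y, T.lt y x → y ∈ B) ∧
  (∀ x ∈ B, ∀ y ∈ B, x = y ∨ T.lt x y ∨ T.lt y x) ∧
  (∀ o : Ordinal, o < κ.ord → ∃ x ∈ B, T.rank x = o)

/-- The number of cofinal branches of height `κ`. -/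
noncomputable def STree.branchCard (T : STree) (κ : Cardinal) : Cardinal :=
  #{B : Set T.σ // T.IsCofBranch κ B}

/-- A `κ`-Kurepa tree: height `κ`, levels of size `< κ`, and at least `κ⁺` cofinal branches. -/
def IsKurepaTree (κ : Cardinal) (T : STree) : Prop :=
  ℵ₀ ≤ κ ∧
  (∀ x : T.σ, T.rank x < κ.ord) ∧
  (∀ o : Ordinal, o < κ.ord → ∃ x : T.σ, T.rank x = o) ∧
  (∀ o : Ordinal, #{x : T.σ // T.rank x = o} < κ) ∧
  Order.succ κ ≤ T.branchCard κ

/-!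
Hang the trees on a spine: take a chain of length `κ` and put `T i` directly above the
`g i`-th node of the chain, for an injection `g : ι → κ`. A node of `T i` of rank `α` then has
rank `g i + α`. Fewer than `κ` trees start below any given level, so by regularity the levels
stay smaller than `κ`. A cofinal branch is either the spine itself or, once it leaves the spine
into `T i`, the spine below `g i` followed by a cofinal branch of `T i`. Hence the glued tree
has `1 + ∑ κ_i` cofinal branches, which is `sup κ_i` because `#ι ≤ κ < κ_i`.
-/

namespace STree

theorem rank_lt_rank (T : STree) {x y : T.σ} (h : T.lt x y) : T.rank x < T.rank y :=
  Acc.rank_lt_of_rel _ h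

theorem exists_lt_rank_eq_of_lt_rank (T : STree) {x : T.σ} {β : Ordinal} (hβ : β < T.rank x) :
    ∃ y, T.lt y x ∧ T.rank y = β := by
  induction x using T.wf.induction generalizing β with
  | _ x ih =>
  rw [STree.rank, Acc.rank_eq, Ordinal.lt_iSup_iff] at hβ
  obtain ⟨⟨y, hyx⟩, hβy⟩ := hβ
  rcases (Order.lt_succ_iff.1 hβy).lt_or_eq with hβy | rfl
  · obtain ⟨z, hzy, rfl⟩ := ih y hyx hβy
    exact ⟨z, T.lt_trans _ _ _ hzy hyx, rfl⟩
  · exact ⟨y, hyx, rfl⟩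

theorem rank_eq_of_strictMono (T : STree) (φ : T.σ → Ordinal)
    (hlt : ∀ {x y}, T.lt x y → φ x < φ y)
    (hexists : ∀ x, ∀ β < φ x, ∃ y, T.lt y x ∧ φ y = β) : T.rank = φ := by
  funext x
  induction x using T.wf.induction with
  | _ x ih =>
  apply le_antisymm
  · rw [STree.rank, Acc.rank_eq]
    exact Ordinal.iSup_le fun ⟨y, hyx⟩ => Order.succ_le_of_lt ((ih y hyx).trans_lt (hlt hyx))
  · refine le_of_forall_lt fun β hβ => ?_
    obtain ⟨y, hyx, rfl⟩ := hexists x β hβ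
    exact ih y hyx ▸ T.rank_lt_rank hyx

end STree

namespace Ordinal.ToType

variable {o : Ordinal}

theorem toOrd_lt (c : o.ToType) : (c : Ordinal) < o := c.toOrd.2

theorem toOrd_lt_toOrd {c d : o.ToType} : (c : Ordinal) < d ↔ c < d :=
  Subtype.coe_lt_coe.trans (ToType.mk.symm.lt_iff_lt)

theorem toOrd_injective : Function.Injective fun c : o.ToType => (c : Ordinal) :=
  Subtype.val_injective.comp ToType.mk.symm.injective

theorem exists_toOrd_eq {β : Ordinal} (hβ : β < o) : ∃ c : o.ToType, (c : Ordinal) = β :=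
  ⟨ToType.mk ⟨β, hβ⟩, by simp⟩

end Ordinal.ToType

open Ordinal.ToType

section Glue

variable {ι : Type} (T : ι → STree) {o : Ordinal.{0}} (g : ι → o.ToType)

abbrev GlueNode (T : ι → STree) (o : Ordinal.{0}) : Type := o.ToType ⊕ Σ i, (T i).σ

inductive GlueLt : GlueNode T o → GlueNode T o → Prop
  | spine {c d : o.ToType} : c < d → GlueLt (.inl c) (.inl d)
  | spine_node {c : o.ToType} {i : ι} {x : (T i).σ} :
      c < g i → GlueLt (.inl c) (.inr ⟨i, x⟩)
  | node {i : ι} {x y : (T i).σ} : (T i).lt x y → GlueLt (.inr ⟨i, x⟩) (.inr ⟨i, y⟩)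

variable {T g}

theorem GlueLt.trans {a b c : GlueNode T o} (hab : GlueLt T g a b) (hbc : GlueLt T g b c) :
    GlueLt T g a c := by
  cases hab with
  | spine h => cases hbc with
    | spine h' => exact .spine (h.trans h')
    | spine_node h' => exact .spine_node (h.trans h')
  | spine_node h => cases hbc with
    | node _ => exact .spine_node h
  | node h => cases hbc with
    | node h' => exact .node ((T _).lt_trans _ _ _ h h')

theorem glueLt_spine_trichotomous (c d : o.ToType) :
    (.inl c : GlueNode T o) = .inl d ∨
      GlueLt T g (.inl c) (.inl d) ∨ GlueLt T g (.inl d) (.inl c) := by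
  rcases lt_trichotomy c d with h | rfl | h
  · exact .inr (.inl (.spine h))
  · exact .inl rfl
  · exact .inr (.inr (.spine h))

theorem GlueLt.pred_linear {a b c : GlueNode T o} (ha : GlueLt T g a c) (hb : GlueLt T g b c) :
    a = b ∨ GlueLt T g a b ∨ GlueLt T g b a := by
  cases ha with
  | spine _ => cases hb with
    | spine _ => exact glueLt_spine_trichotomous _ _
  | spine_node _ => cases hb with
    | spine_node _ => exact glueLt_spine_trichotomous _ _
    | node _ => exact .inr (.inl (.spine_node ‹_›))
  | node hx => cases hb with
    | spine_node _ => exact .inr (.inr (.spine_node ‹_›))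
    | node hy =>
      rcases (T _).pred_linear _ _ _ hx hy with rfl | h | h
      · exact .inl rfl
      · exact .inr (.inl (.node h))
      · exact .inr (.inr (.node h))

variable (T g)

noncomputable def glueHeight : GlueNode T o → Ordinal
  | .inl c => c
  | .inr ⟨i, x⟩ => g i + (T i).rank x

variable {T g}

theorem glueHeight_lt_glueHeight {a b : GlueNode T o} (h : GlueLt T g a b) :
    glueHeight T g a < glueHeight T g b := by
  cases h with
  | spine h => exact toOrd_lt_toOrd.2 h
  | spine_node h => exact (toOrd_lt_toOrd.2 h).trans_le le_self_add
  | node h => exact add_lt_add_right ((T _).rank_lt_rank h) _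

variable (T g)

noncomputable def glue : STree where
  σ := GlueNode T o
  lt := GlueLt T g
  lt_trans _ _ _ := GlueLt.trans
  wf := Subrelation.wf glueHeight_lt_glueHeight (InvImage.wf _ Ordinal.lt_wf)
  pred_linear _ _ _ := GlueLt.pred_linear

theorem glue_rank : (glue T g).rank = glueHeight T g := by
  refine (glue T g).rank_eq_of_strictMono _ glueHeight_lt_glueHeight ?_
  rintro (c | ⟨i, x⟩) β hβ
  · obtain ⟨d, rfl⟩ := exists_toOrd_eq (hβ.trans (toOrd_lt c))
    exact ⟨.inl d, .spine (toOrd_lt_toOrd.1 hβ), rfl⟩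
  · rcases lt_or_ge β (g i) with hβi | hβi
    · obtain ⟨d, rfl⟩ := exists_toOrd_eq (hβi.trans (toOrd_lt (g i)))
      exact ⟨.inl d, .spine_node (toOrd_lt_toOrd.1 hβi), rfl⟩
    · obtain ⟨γ, rfl⟩ := exists_add_of_le hβi
      obtain ⟨y, hyx, rfl⟩ := (T i).exists_lt_rank_eq_of_lt_rank
        ((add_lt_add_iff_left _).1 hβ)
      exact ⟨.inr ⟨i, y⟩, .node hyx, rfl⟩

end Glue

theorem Cardinal.mk_Iio_lt_of_ord_toType {κ : Cardinal} (c : κ.ord.ToType) :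
    #(Set.Iio c) < κ := by
  simpa using mk_Iio_lt c (by simp)

section GlueLevels

variable {κ : Cardinal.{0}} {ι : Type} {T : ι → STree}

theorem glue_rank_lt_ord (hκ : ℵ₀ ≤ κ) (hT : ∀ i x, (T i).rank x < κ.ord)
    (g : ι → κ.ord.ToType) (z : (glue T g).σ) : (glue T g).rank z < κ.ord := by
  rw [glue_rank]
  rcases z with c | ⟨i, x⟩
  · exact toOrd_lt c
  · exact Ordinal.isPrincipal_add_ord hκ (toOrd_lt _) (hT i x)

theorem mk_glue_level_lt (hreg : κ.IsRegular) (hT_rank : ∀ i x, (T i).rank x < κ.ord)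
    (hT_level : ∀ i β, #{x : (T i).σ // (T i).rank x = β} < κ) {g : ι → κ.ord.ToType}
    (hg : Function.Injective g) (β : Ordinal) :
    #{z : (glue T g).σ // (glue T g).rank z = β} < κ := by
  rcases lt_or_ge β κ.ord with hβ | hβ
  swap
  · have : IsEmpty {z : (glue T g).σ // (glue T g).rank z = β} :=
      ⟨fun z => hβ.not_gt (z.2 ▸ glue_rank_lt_ord hreg.aleph0_le hT_rank g z.1)⟩
    rw [mk_eq_zero]
    exact hreg.pos
  -- every node of rank `β` is a spine node below `c₁` or lies in a tree hung below `c₁`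
  obtain ⟨c₁, hc₁⟩ := exists_toOrd_eq ((isSuccLimit_ord hreg.aleph0_le).succ_lt hβ)
  have hcover : {z | (glue T g).rank z = β} ⊆ Sum.inl '' Set.Iio c₁ ∪
      ⋃ i : {i // g i < c₁}, (fun x => .inr ⟨i, x⟩) '' {x | (T i).rank x = β - g i} := by
    rintro (c | ⟨i, x⟩) (hz : (glue T g).rank _ = β) <;>
      simp only [glue_rank, glueHeight] at hz
    · refine .inl ⟨c, ?_, rfl⟩
      rw [Set.mem_Iio, ← toOrd_lt_toOrd, hc₁, hz]
      exact Order.lt_succ β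
    · have hi : g i < c₁ := by
        rw [← toOrd_lt_toOrd, hc₁, Order.lt_succ_iff, ← hz]
        exact le_self_add
      have hx : (T i).rank x = β - g i := by rw [← hz, Ordinal.add_sub_cancel]
      exact .inr (Set.mem_iUnion.2 ⟨⟨i, hi⟩, x, hx, rfl⟩)
  have hindex : #{i // g i < c₁} < κ :=
    (mk_le_of_injective (f := fun i : {i // g i < c₁} => (⟨g i, i.2⟩ : Set.Iio c₁))
      fun _ _ h => Subtype.ext (hg (congrArg Subtype.val h))).trans_lt
      (mk_Iio_lt_of_ord_toType c₁)
  calc #{z : (glue T g).σ // (glue T g).rank z = β}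
      ≤ #(Set.Iio c₁) + sum fun i : {i // g i < c₁} => #{x // (T i).rank x = β - g i} :=
        (mk_le_mk_of_subset hcover).trans <| (mk_union_le _ _).trans <|
          add_le_add mk_image_le
            (mk_iUnion_le_sum_mk.trans (sum_le_sum _ _ fun _ => mk_image_le))
    _ < κ := add_lt_of_lt hreg.aleph0_le (mk_Iio_lt_of_ord_toType c₁)
        (sum_lt_of_isRegular hreg hindex fun i => hT_level i _)

end GlueLevels

section GluePush

variable {ι : Type} {T : ι → STree} {o : Ordinal.{0}} (g : ι → o.ToType)

def gluePush (i : ι) (B : Set (T i).σ) : Set (GlueNode T o) :=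
  Sum.inl '' Set.Iio (g i) ∪ (fun x => .inr ⟨i, x⟩) '' B

def gluePull (i : ι) (B : Set (GlueNode T o)) : Set (T i).σ := {x | .inr ⟨i, x⟩ ∈ B}

def glueSpine : Set (GlueNode T o) := Set.range Sum.inl

theorem gluePull_gluePush (i : ι) (B : Set (T i).σ) : gluePull i (gluePush g i B) = B := by
  ext x
  simp [gluePull, gluePush]

theorem gluePush_injective (i : ι) : Function.Injective (gluePush (T := T) g i) :=
  Function.LeftInverse.injective (gluePull_gluePush g i)

variable {κ : Cardinal.{0}}

theorem isCofBranch_gluePush {i : ι} {B : Set (T i).σ} (hB : (T i).IsCofBranch κ B) :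
    (glue T g).IsCofBranch κ (gluePush g i B) := by
  obtain ⟨hdown, hchain, hcof⟩ := hB
  refine ⟨?_, ?_, ?_⟩
  · rintro _ (⟨c, hc, rfl⟩ | ⟨x, hx, rfl⟩) _ hlt <;> cases hlt
    case spine d hdc => exact .inl ⟨d, hdc.trans hc, rfl⟩
    case spine_node c hc => exact .inl ⟨c, hc, rfl⟩
    case node y hyx => exact .inr ⟨y, hdown x hx y hyx, rfl⟩
  · rintro _ (⟨c, hc, rfl⟩ | ⟨x, hx, rfl⟩) _ (⟨d, hd, rfl⟩ | ⟨y, hy, rfl⟩)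
    · exact glueLt_spine_trichotomous c d
    · exact .inr (.inl (.spine_node hc))
    · exact .inr (.inr (.spine_node hd))
    · rcases hchain x hx y hy with rfl | h | h
      · exact .inl rfl
      · exact .inr (.inl (.node h))
      · exact .inr (.inr (.node h))
  · intro β hβ
    rcases lt_or_ge β (g i) with hβi | hβi
    · obtain ⟨c, rfl⟩ := exists_toOrd_eq (hβi.trans (toOrd_lt (g i)))
      exact ⟨.inl c, .inl ⟨c, toOrd_lt_toOrd.1 hβi, rfl⟩, by rw [glue_rank]; rfl⟩
    · obtain ⟨x, hx, hrx⟩ := hcof (β - g i) ((Ordinal.sub_le_self _ _).trans_lt hβ)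
      refine ⟨.inr ⟨i, x⟩, .inr ⟨x, hx, rfl⟩, ?_⟩
      rw [glue_rank]
      exact (congrArg _ hrx).trans (Ordinal.add_sub_cancel_of_le hβi)

theorem eq_gluePush_gluePull {B : Set (GlueNode T o)} (hB : (glue T g).IsCofBranch κ B)
    {i : ι} {x : (T i).σ} (hx : .inr ⟨i, x⟩ ∈ B) : B = gluePush g i (gluePull i B) := by
  obtain ⟨hdown, hchain, -⟩ := hB
  ext z
  constructor
  · intro hz
    rcases hchain z hz _ hx with h | h | h <;> cases h
    · exact .inr ⟨x, hx, rfl⟩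
    · exact .inl ⟨_, ‹_›, rfl⟩
    · exact .inr ⟨_, hz, rfl⟩
    · exact .inr ⟨_, hz, rfl⟩
  · rintro (⟨c, hc, rfl⟩ | ⟨y, hy, rfl⟩)
    · exact hdown _ hx _ (.spine_node hc)
    · exact hy

end GluePush

section GlueBranches

variable {κ : Cardinal.{0}} {ι : Type} {T : ι → STree} (g : ι → κ.ord.ToType)

theorem isCofBranch_glueSpine : (glue T g).IsCofBranch κ glueSpine := by
  refine ⟨?_, ?_, fun β hβ => ?_⟩
  · rintro _ ⟨c, rfl⟩ _ hlt
    cases hlt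
    exact ⟨_, rfl⟩
  · rintro _ ⟨c, rfl⟩ _ ⟨d, rfl⟩
    exact glueLt_spine_trichotomous c d
  · obtain ⟨c, rfl⟩ := exists_toOrd_eq hβ
    exact ⟨.inl c, ⟨c, rfl⟩, by rw [glue_rank]; rfl⟩

theorem eq_glueSpine_of_forall_notMem {B : Set (GlueNode T κ.ord)}
    (hB : (glue T g).IsCofBranch κ B) (hnode : ∀ a, .inr a ∉ B) : B = glueSpine := by
  ext (c | a)
  · refine ⟨fun _ => ⟨c, rfl⟩, fun _ => ?_⟩
    obtain ⟨c' | a, hc', hrank⟩ := hB.2.2 c (toOrd_lt c)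
    · rw [glue_rank] at hrank
      rwa [← toOrd_injective hrank]
    · exact (hnode a hc').elim
  · exact iff_of_false (hnode a) (by rintro ⟨_, ⟨⟩⟩)

theorem isCofBranch_gluePull (hκ : ℵ₀ ≤ κ) {B : Set (GlueNode T κ.ord)}
    (hB : (glue T g).IsCofBranch κ B) {i : ι} {x : (T i).σ} (hx : .inr ⟨i, x⟩ ∈ B) :
    (T i).IsCofBranch κ (gluePull i B) := by
  have hBi := eq_gluePush_gluePull g hB hx
  obtain ⟨hdown, hchain, hcof⟩ := hB
  refine ⟨fun y hy z hzy => hdown _ hy _ (.node hzy), fun y hy z hz => ?_, fun β hβ => ?_⟩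
  · rcases hchain _ hy _ hz with h | h | h <;> cases h
    · exact .inl rfl
    · exact .inr (.inl ‹_›)
    · exact .inr (.inr ‹_›)
  · obtain ⟨z, hz, hrank⟩ := hcof (g i + β) (Ordinal.isPrincipal_add_ord hκ (toOrd_lt _) hβ)
    rw [hBi] at hz
    rw [glue_rank] at hrank
    rcases hz with ⟨c, hc, rfl⟩ | ⟨y, hy, rfl⟩
    · exact absurd (toOrd_lt_toOrd.2 hc) (hrank ▸ le_self_add).not_gt
    · exact ⟨y, hy, (add_right_inj _).1 hrank⟩

theorem eq_glueSpine_or_exists_eq_gluePush (hκ : ℵ₀ ≤ κ) {B : Set (GlueNode T κ.ord)}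
    (hB : (glue T g).IsCofBranch κ B) :
    B = glueSpine ∨ ∃ i, ∃ C, (T i).IsCofBranch κ C ∧ B = gluePush g i C := by
  by_cases hnode : ∃ a, .inr a ∈ B
  · obtain ⟨⟨i, x⟩, hx⟩ := hnode
    exact .inr ⟨i, _, isCofBranch_gluePull g hκ hB hx, eq_gluePush_gluePull g hB hx⟩
  · exact .inl (eq_glueSpine_of_forall_notMem g hB (not_exists.1 hnode))

theorem branchCard_glue_le (hκ : ℵ₀ ≤ κ) :
    (glue T g).branchCard κ ≤ (sum fun i => (T i).branchCard κ) + 1 := by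
  let branch : Option (Σ i, {C // (T i).IsCofBranch κ C}) →
      {B // (glue T g).IsCofBranch κ B}
    | none => ⟨glueSpine, isCofBranch_glueSpine g⟩
    | some ⟨i, C⟩ => ⟨gluePush g i C, isCofBranch_gluePush g C.2⟩
  have hbranch : Function.Surjective branch := by
    rintro ⟨B, hB⟩
    rcases eq_glueSpine_or_exists_eq_gluePush g hκ hB with rfl | ⟨i, C, hC, rfl⟩
    · exact ⟨none, rfl⟩
    · exact ⟨some ⟨i, C, hC⟩, rfl⟩
  simpa [STree.branchCard, mk_option, mk_sigma] using mk_le_of_surjective hbranch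

theorem branchCard_le_branchCard_glue (i : ι) :
    (T i).branchCard κ ≤ (glue T g).branchCard κ :=
  mk_le_of_injective (f := fun C => ⟨gluePush g i C.1, isCofBranch_gluePush g C.2⟩)
    fun _ _ h => Subtype.ext (gluePush_injective g i (congrArg Subtype.val h))

end GlueBranches

theorem Cardinal.sum_add_one_le_iSup {ι : Type} (f : ι → Cardinal.{0})
    (hι : #ι ≤ ⨆ i, f i) (hinf : ℵ₀ ≤ ⨆ i, f i) : sum f + 1 ≤ ⨆ i, f i :=
  calc sum f + 1 ≤ #ι * (⨆ i, f i) + ⨆ i, f i :=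
        add_le_add (sum_le_mk_mul_iSup f) (one_le_aleph0.trans hinf)
    _ ≤ (⨆ i, f i) * (⨆ i, f i) + ⨆ i, f i := by gcongr
    _ = ⨆ i, f i := by rw [mul_eq_self hinf, add_eq_self hinf]

section Kurepa

variable {κ : Cardinal.{0}} {ι : Type} {T : ι → STree}

theorem branchCard_glue (hκ : ℵ₀ ≤ κ) (hι : #ι ≤ κ)
    (hT : ∃ i, κ ≤ (T i).branchCard κ) (g : ι → κ.ord.ToType) : (glue T g).branchCard κ = ⨆ i, (T i).branchCard κ := by
  obtain ⟨i, hi⟩ := hT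
  have hκ_le : κ ≤ ⨆ i, (T i).branchCard κ := hi.trans (le_ciSup bddAbove_of_small i)
  refine le_antisymm ?_ (ciSup_le' (branchCard_le_branchCard_glue g))
  exact (branchCard_glue_le g hκ).trans
    (sum_add_one_le_iSup _ (hι.trans hκ_le) (hκ.trans hκ_le))

theorem isKurepaTree_glue [Nonempty ι] (hreg : κ.IsRegular) (hT : ∀ i, IsKurepaTree κ (T i))
    {g : ι → κ.ord.ToType} (hg : Function.Injective g) : IsKurepaTree κ (glue T g) := by
  obtain ⟨i₀⟩ := ‹Nonempty ι›
  refine ⟨hreg.aleph0_le, glue_rank_lt_ord hreg.aleph0_le (fun i => (hT i).2.1) g,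
    fun β hβ => ?_, mk_glue_level_lt hreg (fun i => (hT i).2.1) (fun i => (hT i).2.2.2.1) hg,
    (hT i₀).2.2.2.2.trans (branchCard_le_branchCard_glue g i₀)⟩
  obtain ⟨c, rfl⟩ := exists_toOrd_eq hβ
  exact ⟨.inl c, by rw [glue_rank]; rfl⟩

end Kurepa

theorem stmt1_general (κ : Cardinal) (hreg : κ.IsRegular)
    (ι : Type) [Nonempty ι] (hι : #ι ≤ κ)
    (T : ι → STree) (k : ι → Cardinal)
    (hT : ∀ i, IsKurepaTree κ (T i))
    (hk : ∀ i, (T i).branchCard κ = k i) :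
    ∃ S : STree, IsKurepaTree κ S ∧ S.branchCard κ = ⨆ i, k i := by
  obtain ⟨g⟩ : Nonempty (ι ↪ κ.ord.ToType) := by rwa [← le_def, mk_toType, card_ord]
  obtain ⟨i⟩ := ‹Nonempty ι›
  refine ⟨glue T g, isKurepaTree_glue hreg hT g.injective, ?_⟩
  rw [branchCard_glue hreg.aleph0_le hι ⟨i, (Order.le_succ κ).trans (hT i).2.2.2.2⟩]
  exact iSup_congr hk

/-- Gluing at most `κ` many `κ`-Kurepa trees with `κ_i` cofinal branches each yields a
`κ`-Kurepa tree with exactly `sup_i κ_i` cofinal branches. -/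
theorem stmt1 (κ : Cardinal) (hκ : ℵ₀ ≤ κ) (hreg : κ.IsRegular)
    (ι : Type) [Nonempty ι] (hι : #ι ≤ κ)
    (T : ι → STree) (k : ι → Cardinal)
    (hT : ∀ i, IsKurepaTree κ (T i))
    (hk : ∀ i, (T i).branchCard κ = k i) :
    ∃ S : STree, IsKurepaTree κ S ∧ S.branchCard κ = ⨆ i, k i :=
  stmt1_general κ hreg ι hι T k hT hk
end

section
/- There exist two countable linear orders L and L' such that neither is isomorphic to an initial segment of the other; consequently the class of models of ψ fails the joint embedding property in every cardinality. -/
open Cardinal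

/-- A model of the sentence `ψ`: a tree whose levels are indexed by an ℵ₁-like linear
order `L` with a maximum element `⊤`; `V a` is the (countable, for `a ≠ ⊤`) set of nodes
at level `a`, and `V ⊤` is the set of maximal branches. -/
structure PsiModel : Type 1 where
  L : Type
  [linL : LinearOrder L]
  [topL : OrderTop L]
  alephOneLike : ∀ a : L, a ≠ ⊤ → (Set.Iic a).Countable
  V : L → Type
  level_countable : ∀ a : L, a ≠ ⊤ → Countable (V a)
  level_nonempty : ∀ a : L, Nonempty (V a)
  tlt : (Σ a : L, V a) → (Σ a : L, V a) → Prop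
  tlt_level : ∀ x y, tlt x y → x.1 < y.1
  tlt_trans : ∀ x y z, tlt x y → tlt y z → tlt x z
  tlt_total : ∀ x y z, tlt x z → tlt y z → x.1 < y.1 → tlt x y
  tlt_below : ∀ (x : Σ a : L, V a) (b : L), b < x.1 → ∃ y : V b, tlt ⟨b, y⟩ x
  pruned : ∀ x : Σ a : L, V a, x.1 ≠ ⊤ → ∃ y : V ⊤, tlt x ⟨⊤, y⟩
  branch_unique : ∀ x y : V ⊤, (∀ z, tlt z ⟨⊤, x⟩ ↔ tlt z ⟨⊤, y⟩) → x = y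

attribute [instance] PsiModel.linL PsiModel.topL

/-- The cardinality of a model of `ψ` (the universe is `P ∪ L ∪ V` with `P` countably
infinite). -/
noncomputable def PsiModel.card (M : PsiModel) : Cardinal :=
  ℵ₀ + #M.L + #(Σ a : M.L, M.V a)

/-- A substructure embedding between models of `ψ`, incorporating the derived properties:
the level order of the smaller model is an initial segment of that of the larger one,
non-maximal levels agree, and the tree order is preserved. -/
structure PsiEmbed (M N : PsiModel) where
  fL : M.L → N.L
  fL_mono : StrictMono fL
  fL_init : ∀ (a : M.L) (c : N.L), c ≤ fL a → ∃ b : M.L, fL b = c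
  fV : ∀ a : M.L, M.V a → N.V (fL a)
  fV_inj : ∀ a : M.L, Function.Injective (fV a)
  fV_surj : ∀ a : M.L, a ≠ ⊤ → Function.Surjective (fV a)
  tlt_iff : ∀ x y : (Σ a : M.L, M.V a),
    M.tlt x y ↔ N.tlt ⟨fL x.1, fV x.1 x.2⟩ ⟨fL y.1, fV y.1 y.2⟩

/-- The induced map on nodes. -/
def PsiEmbed.map {M N : PsiModel} (e : PsiEmbed M N) (x : Σ a : M.L, M.V a) :
    Σ a : N.L, N.V a := ⟨e.fL x.1, e.fV x.1 x.2⟩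

/-- A model of `ψ` is maximal if it has no proper extension: every embedding into another
model of `ψ` is onto. -/
def PsiModel.MaximalModel (M : PsiModel) : Prop :=
  ∀ (N : PsiModel) (e : PsiEmbed M N),
    Function.Surjective e.fL ∧ ∀ a : M.L, Function.Surjective (e.fV a)

/-- An initial-segment embedding between linear orders: a strictly monotone map with
downward-closed range. -/
def InitSegEmbed {α β : Type} [LinearOrder α] [LinearOrder β] (f : α → β) : Prop :=
  StrictMono f ∧ ∀ (a : α) (c : β), c ≤ f a → ∃ b : α, f b = c


section Pre
variable (M : PsiModel) (P : Type) [LinearOrder P] [Countable P]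

def preV : P ⊕ M.L → Type := Sum.elim (fun _ => PUnit) M.V

def preTlt : (Σ a : P ⊕ M.L, preV M P a) → (Σ a : P ⊕ M.L, preV M P a) → Prop
  | ⟨.inl p, _⟩, ⟨.inl q, _⟩ => p < q
  | ⟨.inl _, _⟩, ⟨.inr _, _⟩ => True
  | ⟨.inr _, _⟩, ⟨.inl _, _⟩ => False
  | ⟨.inr a, u⟩, ⟨.inr b, v⟩ => M.tlt ⟨a, u⟩ ⟨b, v⟩

def prefixModel : PsiModel where
  L := P ⊕ₗ M.L
  alephOneLike := by
    rintro (p | a) ha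
    · apply Set.Countable.mono ?_ (Set.countable_range (fun q : P => toLex (Sum.inl q)))
      rintro (q | b) hq
      · exact ⟨q, rfl⟩
      · exact absurd hq Sum.Lex.not_inr_le_inl
    · have hb : a ≠ ⊤ := fun h => ha (by simp [h]; rfl)
      apply Set.Countable.mono ?_
        ((Set.countable_range (fun q : P => toLex (Sum.inl q))).union
          (((M.alephOneLike a hb).image (fun b => toLex (Sum.inr b)))))
      rintro (q | b) hq
      · exact Or.inl ⟨q, rfl⟩
      · exact Or.inr ⟨b, Sum.Lex.inr_le_inr_iff.mp hq, rfl⟩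
  V := fun a => preV M P (ofLex a)
  level_countable := by
    rintro (p | a) ha
    · exact inferInstanceAs (Countable PUnit)
    · have hb : a ≠ ⊤ := fun h => ha (by simp [h]; rfl)
      exact M.level_countable a hb
  level_nonempty := by
    rintro (p | a)
    · exact ⟨PUnit.unit⟩
    · exact M.level_nonempty a
  tlt := preTlt M P
  tlt_level := by
    rintro ⟨p | a, u⟩ ⟨q | b, v⟩ h
    · exact Sum.Lex.inl_lt_inl_iff.mpr h
    · exact Sum.Lex.inl_lt_inr _ _
    · exact h.elim
    · exact Sum.Lex.inr_lt_inr_iff.mpr (M.tlt_level _ _ h)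
  tlt_trans := by
    rintro ⟨p | a, u⟩ ⟨q | b, v⟩ ⟨r | c, w⟩ h1 h2
    · exact lt_trans (α := P) h1 h2
    · trivial
    · exact (h2 : False).elim
    · trivial
    · exact (h1 : False).elim
    · exact (h1 : False).elim
    · exact (h2 : False).elim
    · exact M.tlt_trans _ _ _ h1 h2
  tlt_total := by
    rintro ⟨p | a, u⟩ ⟨q | b, v⟩ ⟨r | c, w⟩ h1 h2 hlt
    · exact Sum.Lex.inl_lt_inl_iff.mp (show toLex (Sum.inl p) < toLex (Sum.inl q) from hlt)
    · exact Sum.Lex.inl_lt_inl_iff.mp (show toLex (Sum.inl p) < toLex (Sum.inl q) from hlt)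
    · trivial
    · trivial
    · exact (Sum.Lex.not_inr_le_inl
        (le_of_lt (show toLex (Sum.inr a) < toLex (Sum.inl q) from hlt))).elim
    · exact (Sum.Lex.not_inr_le_inl
        (le_of_lt (show toLex (Sum.inr a) < toLex (Sum.inl q) from hlt))).elim
    · exact (h1 : False).elim
    · exact M.tlt_total _ _ _ h1 h2
        (Sum.Lex.inr_lt_inr_iff.mp (show toLex (Sum.inr a) < toLex (Sum.inr b) from hlt))
  tlt_below := by
    rintro ⟨p | a, u⟩ (q | b) hb
    · exact ⟨PUnit.unit, Sum.Lex.inl_lt_inl_iff.mp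
        (show toLex (Sum.inl q) < toLex (Sum.inl p) from hb)⟩
    · exact (Sum.Lex.not_inr_le_inl
        (le_of_lt (show toLex (Sum.inr b) < toLex (Sum.inl p) from hb))).elim
    · exact ⟨PUnit.unit, trivial⟩
    · obtain ⟨y, hy⟩ := M.tlt_below ⟨a, u⟩ b
        (Sum.Lex.inr_lt_inr_iff.mp (show toLex (Sum.inr b) < toLex (Sum.inr a) from hb))
      exact ⟨y, hy⟩
  pruned := by
    rintro ⟨p | a, u⟩ ha
    · exact ⟨(M.level_nonempty ⊤).some, trivial⟩
    · have hb : a ≠ ⊤ := fun h => ha (by simp [h]; rfl)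
      obtain ⟨y, hy⟩ := M.pruned ⟨a, u⟩ hb
      exact ⟨y, hy⟩
  branch_unique := by
    intro x y h
    refine M.branch_unique x y fun z => ?_
    have := h ⟨toLex (Sum.inr z.1), z.2⟩
    exact this

end Pre

def sumSigmaEquiv {α β : Type} (f : α ⊕ β → Type) :
    (Σ x : α ⊕ β, f x) ≃ (Σ a : α, f (.inl a)) ⊕ (Σ b : β, f (.inr b)) where
  toFun := fun x => match x with
    | ⟨.inl a, u⟩ => .inl ⟨a, u⟩
    | ⟨.inr b, v⟩ => .inr ⟨b, v⟩
  invFun := fun x => match x with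
    | .inl ⟨a, u⟩ => ⟨.inl a, u⟩
    | .inr ⟨b, v⟩ => ⟨.inr b, v⟩
  left_inv := by rintro ⟨a | b, u⟩ <;> rfl
  right_inv := by rintro (⟨a, u⟩ | ⟨b, v⟩) <;> rfl

lemma prefixModel_card (M : PsiModel) (P : Type) [LinearOrder P] [Countable P] :
    (prefixModel M P).card = M.card := by
  have hP : #P ≤ ℵ₀ := Cardinal.mk_le_aleph0
  have hadd : ℵ₀ + #P = ℵ₀ := Cardinal.add_eq_left le_rfl hP
  have h1 : #(prefixModel M P).L = #P + #M.L := by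
    have : (prefixModel M P).L ≃ P ⊕ M.L := Equiv.refl _
    rw [Cardinal.mk_congr this]
    simp [Cardinal.mk_sum]
  have h2 : #(Σ a : (prefixModel M P).L, (prefixModel M P).V a)
      = #P + #(Σ a : M.L, M.V a) := by
    have e : (Σ a : (prefixModel M P).L, (prefixModel M P).V a)
        ≃ (Σ _ : P, PUnit) ⊕ (Σ a : M.L, M.V a) := sumSigmaEquiv (preV M P)
    rw [Cardinal.mk_congr (e.trans (Equiv.sumCongr (Equiv.sigmaPUnit P) (Equiv.refl _)))]
    simp [Cardinal.mk_sum]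
  show ℵ₀ + #(prefixModel M P).L + _ = _
  rw [h1, h2]
  show _ = ℵ₀ + #M.L + #(Σ a : M.L, M.V a)
  calc ℵ₀ + (#P + #M.L) + (#P + #(Σ a : M.L, M.V a))
      = (ℵ₀ + #P + #P) + (#M.L + #(Σ a : M.L, M.V a)) := by ring
    _ = ℵ₀ + (#M.L + #(Σ a : M.L, M.V a)) := by rw [hadd, hadd]
    _ = ℵ₀ + #M.L + #(Σ a : M.L, M.V a) := by ring

lemma no_initseg_bot_nomin {α β : Type} [LinearOrder α] [LinearOrder β] [OrderBot α]
    [NoMinOrder β] : ¬ ∃ f : α → β, InitSegEmbed f := by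
  rintro ⟨f, hf, hinit⟩
  obtain ⟨c, hc⟩ := exists_lt (f ⊥)
  obtain ⟨b, hb⟩ := hinit ⊥ c hc.le
  exact absurd (hb ▸ hf.monotone (bot_le (a := b)) : f ⊥ ≤ c) (not_le.mpr hc)

lemma no_initseg_nomin_bot {α β : Type} [LinearOrder α] [LinearOrder β] [Nonempty α]
    [NoMinOrder α] [OrderBot β] : ¬ ∃ f : α → β, InitSegEmbed f := by
  rintro ⟨f, hf, hinit⟩
  obtain ⟨a⟩ := ‹Nonempty α›
  obtain ⟨b, hb⟩ := hinit a ⊥ bot_le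
  obtain ⟨b', hb'⟩ := exists_lt b
  have : f b' < ⊥ := hb ▸ hf hb'
  exact absurd this (by simp)

lemma sub_initseg {α β γ : Type} [LinearOrder α] [LinearOrder β] [LinearOrder γ]
    (f : α → γ) (g : β → γ) (hf : InitSegEmbed f) (hg : InitSegEmbed g)
    (h : ∀ a, ∃ b, g b = f a) : ∃ k : α → β, InitSegEmbed k := by
  classical
  choose k hk using h
  refine ⟨k, fun a a' haa => ?_, fun a c hc => ?_⟩
  · have : g (k a) < g (k a') := by rw [hk, hk]; exact hf.1 haa
    exact hg.1.lt_iff_lt.mp this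
  · have : g c ≤ f a := by rw [← hk a]; exact hg.1.monotone hc
    obtain ⟨b, hb⟩ := hf.2 a (g c) this
    refine ⟨b, hg.1.injective ?_⟩
    rw [hk, hb]


lemma exists_initseg_of_embeds {M₁ M₂ N : PsiModel} (e₁ : PsiEmbed M₁ N)
    (e₂ : PsiEmbed M₂ N) :
    (∃ g : M₁.L → M₂.L, InitSegEmbed g) ∨ (∃ g : M₂.L → M₁.L, InitSegEmbed g) := by
  have hf1 : InitSegEmbed e₁.fL := ⟨e₁.fL_mono, e₁.fL_init⟩
  have hf2 : InitSegEmbed e₂.fL := ⟨e₂.fL_mono, e₂.fL_init⟩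
  by_cases hsub : ∀ a : M₁.L, ∃ b : M₂.L, e₂.fL b = e₁.fL a
  · exact Or.inl (sub_initseg _ _ hf1 hf2 hsub)
  · push_neg at hsub
    obtain ⟨a, ha⟩ := hsub
    refine Or.inr (sub_initseg _ _ hf2 hf1 fun c => ?_)
    rcases le_total (e₂.fL c) (e₁.fL a) with h | h
    · exact e₁.fL_init a (e₂.fL c) h
    · obtain ⟨b, hb⟩ := e₂.fL_init c (e₁.fL a) h
      exact absurd hb (ha b)

instance instNoMinZLex (β : Type) [LinearOrder β] : NoMinOrder (ℤ ⊕ₗ β) := by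
  constructor
  rintro (n | a)
  · exact ⟨toLex (Sum.inl (n - 1)), Sum.Lex.inl_lt_inl_iff.mpr (by omega)⟩
  · exact ⟨toLex (Sum.inl 0), Sum.Lex.inl_lt_inr _ _⟩


/-- There are two countable linear orders neither of which embeds as an initial segment of
the other; consequently the models of `ψ` fail the joint embedding property in every
cardinality of the spectrum. -/
theorem stmt10 :
    (∃ (α β : Type) (_ : LinearOrder α) (_ : LinearOrder β),
      Countable α ∧ Countable β ∧
      (¬ ∃ f : α → β, InitSegEmbed f) ∧ (¬ ∃ g : β → α, InitSegEmbed g)) ∧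
    (∀ κ : Cardinal, (∃ M : PsiModel, M.card = κ) →
      ∃ M₁ M₂ : PsiModel, M₁.card = κ ∧ M₂.card = κ ∧
        ¬ ∃ N : PsiModel, Nonempty (PsiEmbed M₁ N) ∧ Nonempty (PsiEmbed M₂ N)) := by
  constructor
  · exact ⟨ℕ, ℤ, inferInstance, inferInstance, inferInstance, inferInstance,
      no_initseg_bot_nomin, no_initseg_nomin_bot⟩
  · rintro κ ⟨M, hM⟩
    refine ⟨prefixModel M ℕ, prefixModel M ℤ, by rw [prefixModel_card, hM],
      by rw [prefixModel_card, hM], ?_⟩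
    rintro ⟨N, ⟨e₁⟩, ⟨e₂⟩⟩
    haveI hb : OrderBot (prefixModel M ℕ).L := inferInstanceAs (OrderBot (ℕ ⊕ₗ M.L))
    haveI hm : NoMinOrder (prefixModel M ℤ).L := inferInstanceAs (NoMinOrder (ℤ ⊕ₗ M.L))
    haveI hne : Nonempty (prefixModel M ℤ).L :=
      ⟨show ℤ ⊕ₗ M.L from toLex (Sum.inl 0)⟩
    haveI hb' : OrderBot (prefixModel M ℕ).L := hb
    rcases exists_initseg_of_embeds e₁ e₂ with h | h
    · exact no_initseg_bot_nomin h
    · exact no_initseg_nomin_bot h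
end

section
/- There exist three countable linear orders L₀, L₁, L₂ with L₀ an initial segment of both L₁ and L₂, such that there is no linear order L with both L₁ and L₂ embeddable into L as initial segments extending the common copy of L₀ compatibly; hence amalgamation fails for countable models of ψ. -/
open Cardinal

lemma key {α L : Type} [LinearOrder α] [LinearOrder L]
    (f₁ : Bool → L) (f₂ : α → L)
    (h₁m : StrictMono f₁) (h₁i : ∀ a c, c ≤ f₁ a → ∃ b, f₁ b = c)
    (h₂m : StrictMono f₂) (h₂i : ∀ a c, c ≤ f₂ a → ∃ b, f₂ b = c)
    (bot : α) (hbot : ∀ a, bot ≤ a)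
    (z : ℤ → α) (hz : StrictMono z)
    (hall : ∀ a, a = bot ∨ (∃ k, a = z k) ∨ ∀ n, z n < a) : False := by
  have chain : ∀ k : ℤ, f₂ (z k) ≤ f₁ true → False := by
    intro k hk
    obtain ⟨b₀, hb₀⟩ := h₁i true _ hk
    have h1 : f₂ (z (k - 1)) ≤ f₁ true :=
      le_of_lt (lt_of_lt_of_le (h₂m (hz (by omega))) hk)
    obtain ⟨b₁, hb₁⟩ := h₁i true _ h1
    have h2 : f₂ (z (k - 2)) ≤ f₁ true :=
      le_of_lt (lt_of_lt_of_le (h₂m (hz (by omega : (k-2:ℤ) < k))) hk)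
    obtain ⟨b₂, hb₂⟩ := h₁i true _ h2
    have l1 : b₂ < b₁ := h₁m.lt_iff_lt.1 (by
      rw [hb₁, hb₂]; exact h₂m (hz (by omega)))
    have l2 : b₁ < b₀ := h₁m.lt_iff_lt.1 (by
      rw [hb₀, hb₁]; exact h₂m (hz (by omega)))
    rw [Bool.lt_iff] at l1 l2
    simp_all
  rcases le_or_gt (f₂ (z 0)) (f₁ true) with h | h
  · exact chain 0 h
  · obtain ⟨c, hc⟩ := h₂i (z 0) (f₁ true) h.le
    rcases hall c with hcb | ⟨k, hck⟩ | hgt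
    · have hft : f₁ false < f₂ bot :=
        lt_of_lt_of_eq (h₁m (by decide : (false : Bool) < true)) (hcb ▸ hc).symm
      obtain ⟨c', hc'⟩ := h₂i bot (f₁ false) hft.le
      have hlt : c' < bot := h₂m.lt_iff_lt.1 (by rw [hc']; exact hft)
      exact absurd (hbot c') (not_le.2 hlt)
    · exact chain k (hck ▸ hc).le
    · exact absurd (hc ▸ h₂m (hgt 0)) (not_lt.2 h.le)

/-- Generic model with one node per level. -/
noncomputable def mkM (L : Type) [LinearOrder L] [OrderTop L] [Countable L] : PsiModel where
  L := L
  linL := inferInstance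
  topL := inferInstance
  alephOneLike := fun _ _ => Set.to_countable _
  V := fun _ => PUnit
  level_countable := fun _ _ => inferInstance
  level_nonempty := fun _ => ⟨⟨⟩⟩
  tlt := fun x y => x.1 < y.1
  tlt_level := fun _ _ h => h
  tlt_trans := fun _ _ _ h h' => lt_trans h h'
  tlt_total := fun _ _ _ _ _ h => h
  tlt_below := fun _ b h => ⟨⟨⟩, h⟩
  pruned := fun _ h => ⟨⟨⟩, lt_top_iff_ne_top.2 h⟩
  branch_unique := fun x y _ => Subsingleton.elim x y

lemma card_mkM (L : Type) [LinearOrder L] [OrderTop L] [Countable L] :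
    (mkM L).card = ℵ₀ := by
  have h1 : #L ≤ ℵ₀ := Cardinal.mk_le_aleph0
  have h2 : #(Σ _ : L, PUnit) ≤ ℵ₀ := Cardinal.mk_le_aleph0
  show ℵ₀ + #L + #(Σ _ : L, PUnit) = ℵ₀
  rw [Cardinal.add_eq_left le_rfl h1, Cardinal.add_eq_left le_rfl h2]

lemma bool_le_false {c : Bool} (hc : c ≤ false) : c = false := by
  cases c with
  | false => rfl
  | true => exact absurd hc (by decide)

lemma punit_not_lt (u v : PUnit) : ¬ u < v := by
  cases u; cases v; exact lt_irrefl _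

/-- Embedding of the trivial model onto the bottom level. -/
noncomputable def embedBot (L : Type) [LinearOrder L] [OrderTop L] [Countable L]
    (b : L) (hb : ∀ c, c ≤ b → c = b) : PsiEmbed (mkM PUnit) (mkM L) where
  fL := fun _ => b
  fL_mono := fun x y h => absurd h (punit_not_lt x y)
  fL_init := fun a c hc => ⟨a, (hb c hc).symm⟩
  fV := fun _ x => x
  fV_inj := fun _ x y h => h
  fV_surj := fun a ha => absurd (Subsingleton.elim (α := PUnit) a ⊤) ha
  tlt_iff := fun x y => iff_of_false (punit_not_lt x.1 y.1) (lt_irrefl b)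

def wbot : WithTop (WithBot ℤ) := ((⊥ : WithBot ℤ) : WithTop (WithBot ℤ))

lemma wbot_le (a : WithTop (WithBot ℤ)) : wbot ≤ a := by
  cases a with
  | top => exact le_top
  | coe b => exact WithTop.coe_le_coe.2 bot_le

def zt (n : ℤ) : WithTop (WithBot ℤ) := ((n : WithBot ℤ) : WithTop (WithBot ℤ))

lemma zt_mono : StrictMono zt := fun a b h =>
  WithTop.coe_lt_coe.2 (WithBot.coe_lt_coe.2 h)

lemma zt_all (a : WithTop (WithBot ℤ)) :
    a = wbot ∨ (∃ k, a = zt k) ∨ ∀ n, zt n < a := by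
  cases a with
  | top => exact Or.inr (Or.inr fun n => WithTop.coe_lt_top _)
  | coe b =>
    cases b with
    | bot => exact Or.inl rfl
    | coe k => exact Or.inr (Or.inl ⟨k, rfl⟩)


/-- There are countable linear orders `L₀ ⊆ L₁, L₂` (as initial segments) admitting no
amalgam as initial segments of a common linear order; hence amalgamation fails for
countable models of `ψ`. -/
theorem stmt11 :
    (∃ (L₀ L₁ L₂ : Type) (_ : LinearOrder L₀) (_ : LinearOrder L₁) (_ : LinearOrder L₂)
        (e₁ : L₀ → L₁) (e₂ : L₀ → L₂),
      Countable L₀ ∧ Countable L₁ ∧ Countable L₂ ∧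
      InitSegEmbed e₁ ∧ InitSegEmbed e₂ ∧
      ¬ ∃ (L : Type) (_ : LinearOrder L) (f₁ : L₁ → L) (f₂ : L₂ → L),
          InitSegEmbed f₁ ∧ InitSegEmbed f₂ ∧ f₁ ∘ e₁ = f₂ ∘ e₂) ∧
    (∃ (M₀ M₁ M₂ : PsiModel) (e₁ : PsiEmbed M₀ M₁) (e₂ : PsiEmbed M₀ M₂),
      M₀.card = ℵ₀ ∧ M₁.card = ℵ₀ ∧ M₂.card = ℵ₀ ∧
      ¬ ∃ (N : PsiModel) (f₁ : PsiEmbed M₁ N) (f₂ : PsiEmbed M₂ N),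
          f₁.map ∘ e₁.map = f₂.map ∘ e₂.map) := by
  constructor
  · refine ⟨PUnit, Bool, WithBot ℤ, inferInstance, inferInstance, inferInstance,
      fun _ => false, fun _ => (⊥ : WithBot ℤ), inferInstance, inferInstance, inferInstance,
      ⟨fun x y h => absurd h (punit_not_lt x y),
        fun a c hc => ⟨a, (bool_le_false hc).symm⟩⟩,
      ⟨fun x y h => absurd h (punit_not_lt x y),
        fun a c hc => ⟨a, (le_bot_iff.mp hc).symm⟩⟩, ?_⟩
    rintro ⟨L, _, f₁, f₂, ⟨h₁m, h₁i⟩, ⟨h₂m, h₂i⟩, -⟩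
    exact key f₁ f₂ h₁m h₁i h₂m h₂i ⊥ (fun a => bot_le)
      (fun n => (n : WithBot ℤ)) (fun a b h => WithBot.coe_lt_coe.2 h)
      (fun a => by cases a with
        | bot => exact Or.inl rfl
        | coe k => exact Or.inr (Or.inl ⟨k, rfl⟩))
  · refine ⟨mkM PUnit, mkM Bool, mkM (WithTop (WithBot ℤ)),
      embedBot Bool false (fun c hc => bool_le_false hc),
      embedBot _ wbot (fun c hc => le_antisymm hc (wbot_le c)),
      card_mkM _, card_mkM _, card_mkM _, ?_⟩
    rintro ⟨N, f₁, f₂, -⟩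
    exact key f₁.fL f₂.fL f₁.fL_mono f₁.fL_init f₂.fL_mono f₂.fL_init
      wbot wbot_le zt zt_mono zt_all
end

section
/- Let M₀ ⊆ M₁ and M₀ ⊆ M₂ be uncountable models of ψ. Then there exists a model N of ψ with embeddings of M₁ and M₂ into N commuting over M₀; i.e., the class of models of ψ satisfies the amalgamation property in every uncountable cardinality in its spectrum. -/
open Cardinal

/-! Since proper initial segments of the level order are countable, an uncountable `M₀` cannot
sit below a non-maximal level; so both embeddings send `⊤` to `⊤`, and `M₀`, `M₁` and `M₂`
have the same level order and the same non-maximal nodes; they differ only in their maximal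
branches. A maximal branch is determined by its set of predecessors, and these all come from `M₀`.
So `N` is `M₁` enlarged by those branches of `M₂` whose predecessor set, transported to `M₁`,
is not that of a branch of `M₁`, and `M₂` embeds into `N` by sending every branch to the branch
of `N` with the same predecessors. -/

namespace PsiModel

theorem card_le_aleph0 (M : PsiModel) [Countable M.L] [∀ a, Countable (M.V a)] :
    M.card ≤ ℵ₀ := by
  simp only [card, add_le_aleph0, le_rfl, mk_le_aleph0, and_self]

def pred (M : PsiModel) (p : Σ a, M.V a) : Set (Σ a, M.V a) := {x | M.tlt x p}

structure IsBranch (M : PsiModel) (S : Set (Σ a, M.V a)) : Prop where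
  ne_top : ∀ x ∈ S, x.1 ≠ ⊤
  mem_of_tlt : ∀ x y, M.tlt x y → y ∈ S → x ∈ S
  tlt_of_lt : ∀ x ∈ S, ∀ y ∈ S, x.1 < y.1 → M.tlt x y
  exists_mem : ∀ b, b ≠ ⊤ → ∃ v : M.V b, ⟨b, v⟩ ∈ S

variable {M : PsiModel}

theorem not_tlt_of_fst_eq_top {x : Σ a, M.V a} (hx : x.1 = ⊤) (y : Σ a, M.V a) :
    ¬ M.tlt x y :=
  fun h => not_top_lt (hx ▸ M.tlt_level x y h)

theorem fst_ne_top_of_mem_pred {x p : Σ a, M.V a} (hx : x ∈ M.pred p) : x.1 ≠ ⊤ :=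
  (M.tlt_level x p hx).ne_top

theorem eq_of_pred_eq {p q : Σ a, M.V a} (hp : p.1 = ⊤) (hq : q.1 = ⊤)
    (h : M.pred p = M.pred q) : p = q := by
  obtain ⟨a, x⟩ := p
  obtain ⟨b, y⟩ := q
  dsimp only at hp hq
  subst hp hq
  rw [M.branch_unique x y fun z => Set.ext_iff.mp h z]

theorem isBranch_pred {p : Σ a, M.V a} (hp : p.1 = ⊤) : M.IsBranch (M.pred p) where
  ne_top _ := fst_ne_top_of_mem_pred
  mem_of_tlt x y hxy hy := M.tlt_trans x y p hxy hy
  tlt_of_lt x hx y hy := M.tlt_total x y p hx hy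
  exists_mem b hb := M.tlt_below p b (hp ▸ hb.lt_top)

end PsiModel

namespace PsiEmbed

variable {M N : PsiModel}

theorem fL_top (hM : ℵ₀ < M.card) (e : PsiEmbed M N) : e.fL ⊤ = ⊤ := by
  by_contra hne
  have hlevel (a : M.L) : e.fL a ≠ ⊤ := fun ha =>
    hne (top_unique (ha ▸ e.fL_mono.monotone le_top))
  have huniv : e.fL ⁻¹' Set.Iic (e.fL ⊤) = Set.univ :=
    Set.eq_univ_of_forall fun _ => e.fL_mono.monotone le_top
  have : Countable M.L :=
    Set.countable_univ_iff.mp (huniv ▸ (N.alephOneLike _ hne).preimage e.fL_mono.injective)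
  have (a : M.L) : Countable (M.V a) :=
    haveI := N.level_countable _ (hlevel a)
    (e.fV_inj a).countable
  exact hM.not_ge M.card_le_aleph0

theorem map_injective (e : PsiEmbed M N) : Function.Injective e.map := by
  rintro ⟨a, v⟩ ⟨b, w⟩ h
  obtain ⟨hab, hvw⟩ := Sigma.mk.inj_iff.mp h
  dsimp only at hab hvw
  obtain rfl := e.fL_mono.injective hab
  rw [e.fV_inj a (eq_of_heq hvw)]

theorem tlt_map_iff (e : PsiEmbed M N) {x y : Σ a, M.V a} :
    N.tlt (e.map x) (e.map y) ↔ M.tlt x y :=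
  (e.tlt_iff x y).symm

theorem preimage_pred_map (e : PsiEmbed M N) (x : Σ a, M.V a) :
    e.map ⁻¹' N.pred (e.map x) = M.pred x :=
  Set.ext fun _ => e.tlt_map_iff

variable {e : PsiEmbed M N}

theorem fL_surjective (htop : e.fL ⊤ = ⊤) : Function.Surjective e.fL :=
  fun c => e.fL_init ⊤ c (htop ▸ le_top)

theorem fL_eq_top_iff (htop : e.fL ⊤ = ⊤) {a : M.L} : e.fL a = ⊤ ↔ a = ⊤ := by
  rw [← htop, e.fL_mono.injective.eq_iff]

theorem exists_map_eq (htop : e.fL ⊤ = ⊤) {y : Σ b, N.V b} (hy : y.1 ≠ ⊤) :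
    ∃ x, e.map x = y := by
  obtain ⟨b, w⟩ := y
  obtain ⟨a, rfl⟩ := fL_surjective htop b
  obtain ⟨v, rfl⟩ := e.fV_surj a (mt (fL_eq_top_iff htop).mpr hy) w
  exact ⟨⟨a, v⟩, rfl⟩

theorem fst_eq_top_or_exists_map_eq (htop : e.fL ⊤ = ⊤) (y : Σ b, N.V b) :
    y.1 = ⊤ ∨ ∃ x, e.map x = y :=
  (em _).imp_right (exists_map_eq htop)

theorem image_preimage_map (htop : e.fL ⊤ = ⊤) {S : Set (Σ b, N.V b)}
    (hS : ∀ y ∈ S, y.1 ≠ ⊤) : e.map '' (e.map ⁻¹' S) = S :=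
  Set.image_preimage_eq_of_subset fun y hy => exists_map_eq htop (hS y hy)

variable (e) in
noncomputable def levelIso (htop : e.fL ⊤ = ⊤) : M.L ≃o N.L :=
  StrictMono.orderIsoOfSurjective e.fL e.fL_mono (fL_surjective htop)

end PsiEmbed

namespace PsiModel.IsBranch

variable {M N : PsiModel} {e : PsiEmbed M N}

theorem preimage {S : Set (Σ b, N.V b)} (hS : N.IsBranch S) (htop : e.fL ⊤ = ⊤) :
    M.IsBranch (e.map ⁻¹' S) where
  ne_top x hx hx' := hS.ne_top _ hx ((PsiEmbed.fL_eq_top_iff htop).mpr hx')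
  mem_of_tlt _ _ hxy hy := hS.mem_of_tlt _ _ (e.tlt_map_iff.mpr hxy) hy
  tlt_of_lt x hx y hy hxy := e.tlt_map_iff.mp (hS.tlt_of_lt _ hx _ hy (e.fL_mono hxy))
  exists_mem b hb := by
    obtain ⟨w, hw⟩ := hS.exists_mem (e.fL b) (mt (PsiEmbed.fL_eq_top_iff htop).mp hb)
    obtain ⟨v, rfl⟩ := e.fV_surj b hb w
    exact ⟨v, hw⟩

theorem image {S : Set (Σ a, M.V a)} (hS : M.IsBranch S) (htop : e.fL ⊤ = ⊤) :
    N.IsBranch (e.map '' S) where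
  ne_top := by
    rintro _ ⟨x, hx, rfl⟩
    exact mt (PsiEmbed.fL_eq_top_iff htop).mp (hS.ne_top x hx)
  mem_of_tlt := by
    rintro y _ hy ⟨x, hx, rfl⟩
    obtain ⟨z, rfl⟩ := PsiEmbed.exists_map_eq htop (N.tlt_level _ _ hy).ne_top
    exact ⟨z, hS.mem_of_tlt _ _ (e.tlt_map_iff.mp hy) hx, rfl⟩
  tlt_of_lt := by
    rintro _ ⟨x, hx, rfl⟩ _ ⟨y, hy, rfl⟩ hxy
    exact e.tlt_map_iff.mpr (hS.tlt_of_lt x hx y hy (e.fL_mono.lt_iff_lt.mp hxy))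
  exists_mem b hb := by
    obtain ⟨a, rfl⟩ := PsiEmbed.fL_surjective htop b
    obtain ⟨v, hv⟩ := hS.exists_mem a (mt (PsiEmbed.fL_eq_top_iff htop).mpr hb)
    exact ⟨e.fV a v, ⟨a, v⟩, hv, rfl⟩

end PsiModel.IsBranch

namespace PsiEmbed

variable {M N : PsiModel} (F : (Σ a, M.V a) → Σ b, N.V b) (fL : M.L → N.L)
  (hF : ∀ x, (F x).1 = fL x.1)

theorem mk_cast_snd (x : Σ a, M.V a) :
    (⟨fL x.1, cast (congrArg N.V (hF x)) (F x).2⟩ : Σ b, N.V b) = F x :=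
  Sigma.ext (hF x).symm (cast_heq _ _)

def ofMap (fL_mono : StrictMono fL) (fL_init : ∀ a c, c ≤ fL a → ∃ b, fL b = c)
    (hinj : Function.Injective F)
    (hsurj : ∀ a, a ≠ ⊤ → ∀ w : N.V (fL a), ∃ x, F x = ⟨fL a, w⟩)
    (htlt : ∀ x y, M.tlt x y ↔ N.tlt (F x) (F y)) : PsiEmbed M N where
  fL := fL
  fL_mono := fL_mono
  fL_init := fL_init
  fV a v := cast (congrArg N.V (hF ⟨a, v⟩)) (F ⟨a, v⟩).2
  fV_inj a v v' h := by
    refine sigma_mk_injective (hinj ?_)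
    exact (mk_cast_snd F fL hF ⟨a, v⟩).symm.trans
      ((congrArg (Sigma.mk (fL a)) h).trans (mk_cast_snd F fL hF ⟨a, v'⟩))
  fV_surj a ha w := by
    obtain ⟨⟨a', v⟩, hx⟩ := hsurj a ha w
    obtain rfl : a' = a := fL_mono.injective ((hF _).symm.trans (congrArg Sigma.fst hx))
    exact ⟨v, eq_of_heq ((cast_heq _ _).trans (Sigma.ext_iff.mp hx).2)⟩
  tlt_iff x y := by
    rw [mk_cast_snd F fL hF, mk_cast_snd F fL hF]
    exact htlt x y

theorem ofMap_map (fL_mono : StrictMono fL) (fL_init : ∀ a c, c ≤ fL a → ∃ b, fL b = c)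
    (hinj : Function.Injective F)
    (hsurj : ∀ a, a ≠ ⊤ → ∀ w : N.V (fL a), ∃ x, F x = ⟨fL a, w⟩)
    (htlt : ∀ x y, M.tlt x y ↔ N.tlt (F x) (F y)) :
    (ofMap F fL hF fL_mono fL_init hinj hsurj htlt).map = F :=
  funext (mk_cast_snd F fL hF)

end PsiEmbed

/-- Branches to be added to a model: each is given by its set of predecessors, which must be a
branch not already capped by a maximal node. -/
structure PsiModel.NewBranches (M : PsiModel) where
  ι : Type
  β : ι → Set (Σ a, M.V a)
  isBranch : ∀ i, M.IsBranch (β i)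
  injective : Function.Injective β
  ne_pred : ∀ i (q : Σ a, M.V a), q.1 = ⊤ → β i ≠ M.pred q

namespace PsiModel.NewBranches

variable {M : PsiModel} (B : M.NewBranches)

def Level (a : M.L) : Type := M.V a ⊕ {_i : B.ι // a = ⊤}

def tlt : (Σ a, B.Level a) → (Σ a, B.Level a) → Prop
  | ⟨a, .inl v⟩, ⟨b, .inl w⟩ => M.tlt ⟨a, v⟩ ⟨b, w⟩
  | ⟨a, .inl v⟩, ⟨_, .inr i⟩ => ⟨a, v⟩ ∈ B.β i.1
  | ⟨_, .inr _⟩, _ => False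

def trace : B.Level ⊤ → Set (Σ a, M.V a)
  | .inl v => M.pred ⟨⊤, v⟩
  | .inr i => B.β i.1

theorem tlt_inl_top_iff (q : Σ a, M.V a) (x : B.Level ⊤) :
    B.tlt ⟨q.1, .inl q.2⟩ ⟨⊤, x⟩ ↔ q ∈ B.trace x := by
  cases x <;> rfl

theorem trace_injective : Function.Injective B.trace := by
  rintro (v | ⟨i, hi⟩) (w | ⟨j, hj⟩) h
  · rw [sigma_mk_injective (M.eq_of_pred_eq rfl rfl h)]
  · exact absurd h.symm (B.ne_pred j _ rfl)
  · exact absurd h (B.ne_pred i _ rfl)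
  · obtain rfl : i = j := B.injective h
    rfl

def model : PsiModel where
  L := M.L
  alephOneLike := M.alephOneLike
  V := B.Level
  level_countable a ha :=
    haveI := M.level_countable a ha
    haveI : IsEmpty {_i : B.ι // a = ⊤} := ⟨fun i => ha i.2⟩
    inferInstanceAs (Countable (M.V a ⊕ _))
  level_nonempty a := ⟨.inl (M.level_nonempty a).some⟩
  tlt := B.tlt
  tlt_level := by
    rintro ⟨a, v | i⟩ ⟨b, w | ⟨j, rfl⟩⟩ h
    · exact M.tlt_level _ _ h
    · exact lt_top_iff_ne_top.mpr ((B.isBranch j).ne_top _ h)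
    all_goals exact h.elim
  tlt_trans := by
    rintro ⟨a, u | i⟩ ⟨b, v | j⟩ ⟨c, w | k⟩ h₁ h₂
    · exact M.tlt_trans _ _ _ h₁ h₂
    · exact (B.isBranch k.1).mem_of_tlt _ _ h₁ h₂
    all_goals first | exact h₁.elim | exact h₂.elim
  tlt_total := by
    rintro ⟨a, u | i⟩ ⟨b, v | j⟩ ⟨c, w | k⟩ h₁ h₂ hlt
    · exact M.tlt_total _ _ _ h₁ h₂ hlt
    · exact (B.isBranch k.1).tlt_of_lt _ h₁ _ h₂ hlt
    all_goals first | exact h₁.elim | exact h₂.elim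
  tlt_below := by
    rintro ⟨a, v | ⟨i, rfl⟩⟩ b hb
    · obtain ⟨w, hw⟩ := M.tlt_below ⟨a, v⟩ b hb
      exact ⟨.inl w, hw⟩
    · obtain ⟨w, hw⟩ := (B.isBranch i).exists_mem b hb.ne_top
      exact ⟨.inl w, hw⟩
  pruned := by
    rintro ⟨a, v | i⟩ ha
    · obtain ⟨w, hw⟩ := M.pruned ⟨a, v⟩ ha
      exact ⟨.inl w, hw⟩
    · exact absurd i.2 ha
  branch_unique x y h := B.trace_injective <| Set.ext fun q => by
    rw [← tlt_inl_top_iff, ← tlt_inl_top_iff]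
    exact h ⟨q.1, .inl q.2⟩

def embed : PsiEmbed M B.model where
  fL := id
  fL_mono := strictMono_id
  fL_init _ c _ := ⟨c, rfl⟩
  fV _ := Sum.inl
  fV_inj _ := Sum.inl_injective
  fV_surj a ha := by
    rintro (v | i)
    · exact ⟨v, rfl⟩
    · exact absurd i.2 ha
  tlt_iff _ _ := Iff.rfl

def node (i : B.ι) : Σ a, B.model.V a := ⟨⊤, .inr ⟨i, rfl⟩⟩

theorem tlt_embed_map_node (x : Σ a, M.V a) (i : B.ι) :
    B.model.tlt (B.embed.map x) (B.node i) ↔ x ∈ B.β i :=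
  Iff.rfl

end PsiModel.NewBranches

section Amalgamation

variable {M₀ M₁ M₂ : PsiModel} (e₁ : PsiEmbed M₀ M₁) (e₂ : PsiEmbed M₀ M₂)

def transport (S : Set (Σ a, M₂.V a)) : Set (Σ a, M₁.V a) := e₁.map '' (e₂.map ⁻¹' S)

theorem transport_pred_map (h₁ : e₁.fL ⊤ = ⊤) (z : Σ a, M₀.V a) :
    transport e₁ e₂ (M₂.pred (e₂.map z)) = M₁.pred (e₁.map z) := by
  rw [transport, e₂.preimage_pred_map, ← e₁.preimage_pred_map]
  exact PsiEmbed.image_preimage_map h₁ fun _ => PsiModel.fst_ne_top_of_mem_pred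

theorem eq_of_transport_pred_eq (h₂ : e₂.fL ⊤ = ⊤) {p p' : Σ a, M₂.V a} (hp : p.1 = ⊤)
    (hp' : p'.1 = ⊤) (h : transport e₁ e₂ (M₂.pred p) = transport e₁ e₂ (M₂.pred p')) :
    p = p' := by
  have hpre := congrArg (e₁.map ⁻¹' ·) h
  simp only [transport, Set.preimage_image_eq _ e₁.map_injective] at hpre
  refine M₂.eq_of_pred_eq hp hp' ?_
  rw [← PsiEmbed.image_preimage_map h₂ fun _ => PsiModel.fst_ne_top_of_mem_pred, hpre,
    PsiEmbed.image_preimage_map h₂ fun _ => PsiModel.fst_ne_top_of_mem_pred]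

def NewBranch : Type :=
  {p : Σ a, M₂.V a //
    p.1 = ⊤ ∧ ¬∃ q : Σ a, M₁.V a, q.1 = ⊤ ∧ M₁.pred q = transport e₁ e₂ (M₂.pred p)}

variable (h₁ : e₁.fL ⊤ = ⊤) (h₂ : e₂.fL ⊤ = ⊤)

def amalgBranches : M₁.NewBranches where
  ι := NewBranch e₁ e₂
  β p := transport e₁ e₂ (M₂.pred p.1)
  isBranch p := ((M₂.isBranch_pred p.2.1).preimage h₂).image h₁
  injective p p' h := Subtype.ext (eq_of_transport_pred_eq e₁ e₂ h₂ p.2.1 p'.2.1 h)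
  ne_pred p q hq h := p.2.2 ⟨q, hq, h.symm⟩

noncomputable def amalgLevel : M₂.L ≃o M₁.L := (e₂.levelIso h₂).symm.trans (e₁.levelIso h₁)

theorem amalgLevel_fL (a : M₀.L) : amalgLevel e₁ e₂ h₁ h₂ (e₂.fL a) = e₁.fL a :=
  congrArg e₁.fL ((e₂.levelIso h₂).symm_apply_apply a)

open Classical in
/-- A maximal node of `M₂` goes to the maximal node of the amalgam with the same predecessors,
an old one if there is one. -/
noncomputable def amalgMap (p : Σ a, M₂.V a) : Σ a, (amalgBranches e₁ e₂ h₁ h₂).model.V a :=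
  if hp : p.1 = ⊤ then
    if h : ∃ q : Σ a, M₁.V a, q.1 = ⊤ ∧ M₁.pred q = transport e₁ e₂ (M₂.pred p) then
      (amalgBranches e₁ e₂ h₁ h₂).embed.map h.choose
    else (amalgBranches e₁ e₂ h₁ h₂).node ⟨p, hp, h⟩
  else (amalgBranches e₁ e₂ h₁ h₂).embed.map (e₁.map (PsiEmbed.exists_map_eq h₂ hp).choose)

theorem amalgMap_map (z : Σ a, M₀.V a) :
    amalgMap e₁ e₂ h₁ h₂ (e₂.map z) = (amalgBranches e₁ e₂ h₁ h₂).embed.map (e₁.map z) := by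
  by_cases hz : z.1 = ⊤
  · have hz₁ : (e₁.map z).1 = ⊤ := (PsiEmbed.fL_eq_top_iff h₁).mpr hz
    have hz₂ : (e₂.map z).1 = ⊤ := (PsiEmbed.fL_eq_top_iff h₂).mpr hz
    have hex : ∃ q : Σ a, M₁.V a, q.1 = ⊤ ∧ M₁.pred q = transport e₁ e₂ (M₂.pred (e₂.map z)) :=
      ⟨e₁.map z, hz₁, (transport_pred_map e₁ e₂ h₁ z).symm⟩
    rw [amalgMap, dif_pos hz₂, dif_pos hex]
    obtain ⟨hq, hpred⟩ := hex.choose_spec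
    rw [M₁.eq_of_pred_eq hq hz₁ (hpred.trans (transport_pred_map e₁ e₂ h₁ z))]
  · have hz₂ : (e₂.map z).1 ≠ ⊤ := mt (PsiEmbed.fL_eq_top_iff h₂).mp hz
    rw [amalgMap, dif_neg hz₂, e₂.map_injective (PsiEmbed.exists_map_eq h₂ hz₂).choose_spec]

theorem tlt_embed_map_amalgMap {p : Σ a, M₂.V a} (hp : p.1 = ⊤) (y : Σ a, M₁.V a) :
    (amalgBranches e₁ e₂ h₁ h₂).model.tlt ((amalgBranches e₁ e₂ h₁ h₂).embed.map y)
      (amalgMap e₁ e₂ h₁ h₂ p) ↔ y ∈ transport e₁ e₂ (M₂.pred p) := by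
  rw [amalgMap, dif_pos hp]
  split_ifs with h
  · rw [PsiEmbed.tlt_map_iff]
    exact Set.ext_iff.mp h.choose_spec.2 y
  · exact PsiModel.NewBranches.tlt_embed_map_node _ _ _

theorem amalgMap_fst (p : Σ a, M₂.V a) :
    (amalgMap e₁ e₂ h₁ h₂ p).1 = amalgLevel e₁ e₂ h₁ h₂ p.1 := by
  rcases PsiEmbed.fst_eq_top_or_exists_map_eq h₂ p with hp | ⟨z, rfl⟩
  · rw [hp, OrderIso.map_top, amalgMap, dif_pos hp]
    split_ifs with h
    exacts [h.choose_spec.1, rfl]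
  · rw [amalgMap_map]
    exact (amalgLevel_fL e₁ e₂ h₁ h₂ z.1).symm

theorem amalgMap_injective : Function.Injective (amalgMap e₁ e₂ h₁ h₂) := by
  intro p p' h
  have hlevel : p.1 = p'.1 := (amalgLevel e₁ e₂ h₁ h₂).injective <| by
    rw [← amalgMap_fst, ← amalgMap_fst, h]
  by_cases hp : p.1 = ⊤
  · refine eq_of_transport_pred_eq e₁ e₂ h₂ hp (hlevel ▸ hp) (Set.ext fun y => ?_)
    rw [← tlt_embed_map_amalgMap e₁ e₂ h₁ h₂ hp, h,
      tlt_embed_map_amalgMap e₁ e₂ h₁ h₂ (hlevel ▸ hp)]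
  · obtain ⟨z, rfl⟩ := PsiEmbed.exists_map_eq h₂ hp
    obtain ⟨z', rfl⟩ := PsiEmbed.exists_map_eq h₂ (hlevel ▸ hp)
    rw [amalgMap_map, amalgMap_map] at h
    rw [e₁.map_injective ((amalgBranches e₁ e₂ h₁ h₂).embed.map_injective h)]

theorem tlt_iff_tlt_amalgMap (p q : Σ a, M₂.V a) :
    M₂.tlt p q ↔ (amalgBranches e₁ e₂ h₁ h₂).model.tlt (amalgMap e₁ e₂ h₁ h₂ p)
      (amalgMap e₁ e₂ h₁ h₂ q) := by
  rcases PsiEmbed.fst_eq_top_or_exists_map_eq h₂ p with hp | ⟨z, rfl⟩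
  · have hp' : (amalgMap e₁ e₂ h₁ h₂ p).1 = ⊤ := by
      rw [amalgMap_fst, hp, OrderIso.map_top]
      rfl
    exact iff_of_false (PsiModel.not_tlt_of_fst_eq_top hp _)
      (PsiModel.not_tlt_of_fst_eq_top hp' _)
  rw [amalgMap_map]
  rcases PsiEmbed.fst_eq_top_or_exists_map_eq h₂ q with hq | ⟨w, rfl⟩
  · rw [tlt_embed_map_amalgMap e₁ e₂ h₁ h₂ hq, transport, e₁.map_injective.mem_set_image]
    rfl
  · rw [amalgMap_map, PsiEmbed.tlt_map_iff, PsiEmbed.tlt_map_iff, PsiEmbed.tlt_map_iff]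

noncomputable def amalgEmbed : PsiEmbed M₂ (amalgBranches e₁ e₂ h₁ h₂).model :=
  PsiEmbed.ofMap (amalgMap e₁ e₂ h₁ h₂) (amalgLevel e₁ e₂ h₁ h₂) (amalgMap_fst e₁ e₂ h₁ h₂)
    (amalgLevel e₁ e₂ h₁ h₂).strictMono (fun _ c _ => (amalgLevel e₁ e₂ h₁ h₂).surjective c)
    (amalgMap_injective e₁ e₂ h₁ h₂)
    (fun a ha w => by
      have hw : amalgLevel e₁ e₂ h₁ h₂ a ≠ ⊤ := by rwa [ne_eq, map_eq_top_iff]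
      rcases w with w | ⟨_, hw'⟩
      · obtain ⟨z, hz⟩ := PsiEmbed.exists_map_eq h₁ (y := ⟨_, w⟩) hw
        exact ⟨e₂.map z, by rw [amalgMap_map, hz]; rfl⟩
      · exact absurd hw' hw)
    (tlt_iff_tlt_amalgMap e₁ e₂ h₁ h₂)

theorem amalgEmbed_map : (amalgEmbed e₁ e₂ h₁ h₂).map = amalgMap e₁ e₂ h₁ h₂ :=
  PsiEmbed.ofMap_map ..

end Amalgamation

theorem exists_amalgamation {M₀ M₁ M₂ : PsiModel} (e₁ : PsiEmbed M₀ M₁)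
    (e₂ : PsiEmbed M₀ M₂) (h₁ : e₁.fL ⊤ = ⊤) (h₂ : e₂.fL ⊤ = ⊤) :
    ∃ (N : PsiModel) (f₁ : PsiEmbed M₁ N) (f₂ : PsiEmbed M₂ N),
      f₁.map ∘ e₁.map = f₂.map ∘ e₂.map := by
  refine ⟨_, (amalgBranches e₁ e₂ h₁ h₂).embed, amalgEmbed e₁ e₂ h₁ h₂, ?_⟩
  rw [amalgEmbed_map]
  exact funext fun z => (amalgMap_map e₁ e₂ h₁ h₂ z).symm

theorem stmt13_general (M₀ M₁ M₂ : PsiModel)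
    (h₀ : ℵ₀ < M₀.card)
    (e₁ : PsiEmbed M₀ M₁) (e₂ : PsiEmbed M₀ M₂) :
    ∃ (N : PsiModel) (f₁ : PsiEmbed M₁ N) (f₂ : PsiEmbed M₂ N),
      f₁.map ∘ e₁.map = f₂.map ∘ e₂.map :=
  exists_amalgamation e₁ e₂ (e₁.fL_top h₀) (e₂.fL_top h₀)

/-- Uncountable models of `ψ` can be amalgamated: given uncountable `M₀ ⊆ M₁, M₂`, there is
a model `N` of `ψ` with embeddings of `M₁` and `M₂` commuting over `M₀`. -/
theorem stmt13 (M₀ M₁ M₂ : PsiModel)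
    (h₀ : ℵ₀ < M₀.card) (h₁ : ℵ₀ < M₁.card) (h₂ : ℵ₀ < M₂.card)
    (e₁ : PsiEmbed M₀ M₁) (e₂ : PsiEmbed M₀ M₂) :
    ∃ (N : PsiModel) (f₁ : PsiEmbed M₁ N) (f₂ : PsiEmbed M₂ N),
      f₁.map ∘ e₁.map = f₂.map ∘ e₂.map :=
  stmt13_general M₀ M₁ M₂ h₀ e₁ e₂
end

section
/- Assuming CH, the poset P for adding a Kurepa tree with ℵ_{ω₁} branches (conditions (t,f) with t a countable tree of successor countable height with countable levels and f a countable partial function from ℵ_{ω₁} onto the top level of t) satisfies the ℵ₂-chain condition. -/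
/-!
Under CH there are only `ℵ₁` countable trees on `ω₁ × ℕ`, so it suffices to bound a part of the
antichain whose members share their tree. Two such conditions are compatible as soon as their
`f`-parts agree on the common domain, so what is left is the combinatorial core: a family of
countable partial functions into `ℕ` which pairwise disagree somewhere has size at most `ℵ₁`.

For this, iterate `ω₁` times the step that adds, for every trace on the union of the domains
collected so far, one member of the family realising it. Since `ℵ₁ ^ ℵ₀ = ℵ₁`, the resulting
subfamily `B` has size at most `ℵ₁`. As `ω₁` has uncountable cofinality, for each `p` the countable
set `dom p ∩ ⋃_{q ∈ B} dom q` already lies in the domains of some countable stage; if `p ∉ B`, a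
witness `q ∈ B` with the same trace there agrees with `p` on `dom p ∩ dom q`, a contradiction.
-/

open Cardinal

/-- A condition in the standard poset for adding a Kurepa tree with `ℵ_{ω₁}` branches:
a pair `(t, f)` where `t` is a tree of height `β + 1` (for some `β < ω₁`) with countable
levels, whose nodes at level `γ` are pairs `(γ, n)` with `n : ℕ`, and `f` is a countable
partial function from `ℵ_{ω₁}` onto the top level `t_β`. -/
structure KCond : Type 1 where
  β : Ordinal.{0}
  β_lt : β < (aleph 1).ord
  t : Set (Ordinal.{0} × ℕ)
  t_le : ∀ p ∈ t, p.1 ≤ β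
  level_nonempty : ∀ γ : Ordinal.{0}, γ ≤ β → ∃ n : ℕ, (γ, n) ∈ t
  tlt : (Ordinal.{0} × ℕ) → (Ordinal.{0} × ℕ) → Prop
  tlt_mem : ∀ p q, tlt p q → p ∈ t ∧ q ∈ t ∧ p.1 < q.1
  tlt_trans : ∀ p q r, tlt p q → tlt q r → tlt p r
  tlt_total : ∀ p q r, tlt p r → tlt q r → p.1 < q.1 → tlt p q
  tlt_below : ∀ q ∈ t, ∀ γ : Ordinal.{0}, γ < q.1 → ∃ n : ℕ, tlt (γ, n) q
  limit_unique : ∀ γ : Ordinal.{0}, γ ≠ 0 → (∀ δ : Ordinal.{0}, γ ≠ δ + 1) →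
    ∀ m n : ℕ, (γ, m) ∈ t → (γ, n) ∈ t →
      (∀ p, tlt p (γ, m) ↔ tlt p (γ, n)) → m = n
  dom : Set Ordinal.{0}
  dom_sub : ∀ δ ∈ dom, δ < (aleph ((aleph 1).ord)).ord
  dom_countable : dom.Countable
  fmap : Ordinal.{0} → ℕ
  fmap_mem : ∀ δ ∈ dom, (β, fmap δ) ∈ t
  fmap_surj : ∀ n : ℕ, (β, n) ∈ t → ∃ δ ∈ dom, fmap δ = n

/-- The extension order on conditions: `q ≤ p` iff the tree of `p` is an initial segment of
the tree of `q` (with the same tree order), `dom f^p ⊆ dom f^q`, and for `δ ∈ dom f^p` the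
node `f^q(δ)` extends (or equals) `f^p(δ)` in the tree order of `q`. -/
def KCond.le (q p : KCond) : Prop :=
  p.β ≤ q.β ∧
  p.t = {x ∈ q.t | x.1 ≤ p.β} ∧
  (∀ x y : Ordinal.{0} × ℕ, x.1 ≤ p.β → y.1 ≤ p.β → (p.tlt x y ↔ q.tlt x y)) ∧
  p.dom ⊆ q.dom ∧
  ∀ δ ∈ p.dom,
    (p.β, p.fmap δ) = (q.β, q.fmap δ) ∨ q.tlt (p.β, p.fmap δ) (q.β, q.fmap δ)

open Ordinal Set

universe u

theorem aleph_one_power_aleph0_of_CH (hCH : (2 : Cardinal.{u}) ^ ℵ₀ = ℵ₁) :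
    (ℵ₁ : Cardinal.{u}) ^ ℵ₀ = ℵ₁ := by
  rw [← hCH, ← power_mul, aleph0_mul_aleph0]

theorem mk_countable_subsets_le_of_CH (hCH : (2 : Cardinal.{u}) ^ ℵ₀ = ℵ₁) {α : Type u}
    {s : Set α} (hs : #s ≤ ℵ₁) : #{t : Set α | t ⊆ s ∧ t.Countable} ≤ ℵ₁ :=
  calc #{t : Set α | t ⊆ s ∧ t.Countable} = #{t : Set α // t ⊆ s ∧ #t ≤ ℵ₀} :=
        mk_congr <| Equiv.subtypeEquivRight fun t => by rw [le_aleph0_iff_set_countable]; rfl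
    _ ≤ max #s ℵ₀ ^ ℵ₀ := mk_bounded_subset_le s ℵ₀
    _ ≤ ℵ₁ ^ ℵ₀ := power_le_power_right (max_le hs aleph0_lt_aleph_one.le)
    _ = ℵ₁ := aleph_one_power_aleph0_of_CH hCH

theorem Ordinal.countable_Iio_of_lt_omega_one {o : Ordinal.{u}} (ho : o < ω₁) :
    (Iio o).Countable := by
  rwa [← le_aleph0_iff_set_countable, Cardinal.mk_Iio_ordinal, lift_le_aleph0, ← lt_aleph_one_iff,
    ← lt_ord, ord_aleph]

theorem exists_lt_omega_one_subset_of_countable {X : Type*} {F : Ordinal.{u} → Set X}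
    (hF : Monotone F) {S : Set X} (hS : S.Countable) (hSF : S ⊆ ⋃ η < ω₁, F η) :
    ∃ η < ω₁, S ⊆ F η := by
  have hstage : ∀ x : S, ∃ η < ω₁, (x : X) ∈ F η := fun x => by
    simpa only [mem_iUnion, exists_prop] using hSF x.2
  choose η hη hxη using hstage
  have : Countable S := hS.to_subtype
  exact ⟨⨆ x, η x, Ordinal.iSup_lt_omega_one hη, fun x hx =>
    hF (Ordinal.le_iSup η ⟨x, hx⟩) (hxη ⟨x, hx⟩)⟩

section PairwiseConflict

variable {ι X : Type u} (dom : ι → Set X) (f : ι → X → ℕ)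

def domUnion (B : Set ι) : Set X := ⋃ i ∈ B, dom i

def traceOn (D : Set X) (i : ι) : Set (X × ℕ) := (fun x => (x, f i x)) '' (dom i ∩ D)

noncomputable def traceWitnesses (C : Set ι) (D : Set X) : Set ι :=
  range fun t : traceOn dom f D '' C => t.2.choose

noncomputable def witnessClosure (C : Set ι) (ξ : Ordinal.{u}) : Set ι :=
  ⋃ η < ξ, traceWitnesses dom f C (domUnion dom (witnessClosure C η))
termination_by ξ

variable {dom f}

theorem domUnion_mono : Monotone (domUnion dom : Set ι → Set X) :=
  fun _ _ h => biUnion_subset_biUnion_left h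

theorem mem_domUnion {B : Set ι} {i : ι} (hi : i ∈ B) {x : X} (hx : x ∈ dom i) :
    x ∈ domUnion dom B :=
  mem_biUnion hi hx

theorem apply_eq_of_traceOn_eq {D : Set X} {i j : ι} (h : traceOn dom f D i = traceOn dom f D j)
    {x : X} (hx : x ∈ dom i ∩ D) : f i x = f j x := by
  obtain ⟨y, -, hy⟩ : (x, f i x) ∈ traceOn dom f D j := h ▸ mem_image_of_mem _ hx
  obtain ⟨rfl, hxy⟩ := Prod.ext_iff.1 hy
  exact hxy.symm

theorem mk_domUnion_le (hdom : ∀ i, (dom i).Countable) {B : Set ι} (hB : #B ≤ ℵ₁) :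
    #(domUnion dom B) ≤ ℵ₁ :=
  (mk_biUnion_le _ _).trans <| mul_le_of_le aleph0_lt_aleph_one.le hB <|
    ciSup_le' fun i => (le_aleph0_iff_set_countable.2 (hdom i)).trans aleph0_lt_aleph_one.le

theorem traceWitnesses_subset (C : Set ι) (D : Set X) : traceWitnesses dom f C D ⊆ C := by
  rintro _ ⟨t, rfl⟩
  exact t.2.choose_spec.1

theorem exists_mem_traceWitnesses {C : Set ι} (D : Set X) {p : ι} (hp : p ∈ C) :
    ∃ q ∈ traceWitnesses dom f C D, traceOn dom f D q = traceOn dom f D p :=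
  let t : traceOn dom f D '' C := ⟨_, p, hp, rfl⟩
  ⟨t.2.choose, mem_range_self t, t.2.choose_spec.2⟩

theorem mk_traceWitnesses_le (hCH : (2 : Cardinal.{u}) ^ ℵ₀ = ℵ₁)
    (hdom : ∀ i, (dom i).Countable) (C : Set ι) {D : Set X} (hD : #D ≤ ℵ₁) :
    #(traceWitnesses dom f C D) ≤ ℵ₁ := by
  have htrace : traceOn dom f D '' C ⊆ {t | t ⊆ D ×ˢ (univ : Set ℕ) ∧ t.Countable} := by
    rintro _ ⟨p, -, rfl⟩
    refine ⟨?_, ((hdom p).mono inter_subset_left).image _⟩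
    rintro _ ⟨x, ⟨-, hx⟩, rfl⟩
    exact ⟨hx, trivial⟩
  have hDN : #(D ×ˢ (univ : Set ℕ)) ≤ ℵ₁ := by
    rw [mk_congr (Equiv.Set.prod _ _), mk_prod, mk_univ, mk_nat, Cardinal.lift_uzero, lift_aleph0]
    exact mul_le_of_le aleph0_lt_aleph_one.le hD aleph0_lt_aleph_one.le
  exact mk_range_le.trans <| (mk_le_mk_of_subset htrace).trans <|
    mk_countable_subsets_le_of_CH hCH hDN

theorem witnessClosure_eq (C : Set ι) (ξ : Ordinal.{u}) :
    witnessClosure dom f C ξ =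
      ⋃ η < ξ, traceWitnesses dom f C (domUnion dom (witnessClosure dom f C η)) := by
  rw [witnessClosure]

theorem traceWitnesses_subset_witnessClosure (C : Set ι) {η ξ : Ordinal.{u}} (h : η < ξ) :
    traceWitnesses dom f C (domUnion dom (witnessClosure dom f C η)) ⊆
      witnessClosure dom f C ξ := by
  rw [witnessClosure_eq C ξ]
  exact fun _ hi => mem_iUnion₂_of_mem h hi

theorem witnessClosure_subset (C : Set ι) (ξ : Ordinal.{u}) : witnessClosure dom f C ξ ⊆ C := by
  rw [witnessClosure_eq]
  exact iUnion₂_subset fun _ _ => traceWitnesses_subset _ _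

theorem witnessClosure_mono (C : Set ι) : Monotone (witnessClosure dom f C) := by
  intro η ξ h
  rw [witnessClosure_eq C η, witnessClosure_eq C ξ]
  exact biUnion_subset_biUnion_left fun _ hζ => lt_of_lt_of_le hζ h

theorem domUnion_witnessClosure_omega_one (C : Set ι) :
    domUnion dom (witnessClosure dom f C ω₁) ⊆
      ⋃ η < ω₁, domUnion dom (witnessClosure dom f C η) := by
  intro x hx
  simp only [domUnion, witnessClosure_eq C ω₁, mem_iUnion, exists_prop] at hx ⊢
  obtain ⟨i, ⟨η, hη, hi⟩, hx⟩ := hx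
  exact ⟨η + 1, (isSuccLimit_omega 1).add_one_lt hη, i,
    traceWitnesses_subset_witnessClosure C (lt_add_one η) hi, hx⟩

theorem mk_witnessClosure_le (hCH : (2 : Cardinal.{u}) ^ ℵ₀ = ℵ₁)
    (hdom : ∀ i, (dom i).Countable) (C : Set ι) {ξ : Ordinal.{u}} (hξ : ξ ≤ ω₁) :
    #(witnessClosure dom f C ξ) ≤ ℵ₁ := by
  induction ξ using WellFoundedLT.induction with
  | _ ξ ih =>
    rw [witnessClosure_eq]
    refine mk_biUnion_le_of_le (by simpa using card_le_card hξ) aleph0_lt_aleph_one.le _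
      fun η hη => mk_traceWitnesses_le hCH hdom C (mk_domUnion_le hdom (ih η hη (hη.le.trans hξ)))

theorem mk_le_aleph_one_of_pairwise_conflict (hCH : (2 : Cardinal.{u}) ^ ℵ₀ = ℵ₁)
    (hdom : ∀ i, (dom i).Countable) {C : Set ι}
    (hC : C.Pairwise fun i j => ∃ x ∈ dom i ∩ dom j, f i x ≠ f j x) : #C ≤ ℵ₁ := by
  set B := witnessClosure dom f C ω₁
  suffices C ⊆ B from (mk_le_mk_of_subset this).trans (mk_witnessClosure_le hCH hdom C le_rfl)
  intro p hp
  by_contra hpB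
  obtain ⟨η, hη, hS⟩ := exists_lt_omega_one_subset_of_countable
    (domUnion_mono.comp (witnessClosure_mono C)) ((hdom p).mono inter_subset_left)
    (inter_subset_right.trans (domUnion_witnessClosure_omega_one C))
  obtain ⟨q, hqW, hqp⟩ := exists_mem_traceWitnesses (domUnion dom (witnessClosure dom f C η)) hp
  have hqB : q ∈ B := traceWitnesses_subset_witnessClosure C hη hqW
  have hpq : p ≠ q := fun h => hpB (h ▸ hqB)
  obtain ⟨x, ⟨hxp, hxq⟩, hne⟩ := hC hp (traceWitnesses_subset _ _ hqW) hpq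
  exact hne (apply_eq_of_traceOn_eq hqp.symm ⟨hxp, hS ⟨hxp, mem_domUnion hqB hxq⟩⟩)

end PairwiseConflict

namespace KCond

def tree (p : KCond) : Set (Ordinal.{0} × ℕ) × Set ((Ordinal.{0} × ℕ) × (Ordinal.{0} × ℕ)) :=
  (p.t, {z | p.tlt z.1 z.2})

theorem t_subset_Iic (p : KCond) : p.t ⊆ Iic p.β ×ˢ Set.univ :=
  fun x hx => ⟨p.t_le x hx, trivial⟩

theorem β_lt_omega_one (p : KCond) : p.β < ω₁ := by
  simpa using p.β_lt

theorem t_subset_Iio_omega_one (p : KCond) : p.t ⊆ Iio ω₁ ×ˢ Set.univ :=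
  p.t_subset_Iic.trans (prod_mono (Iic_subset_Iio.2 p.β_lt_omega_one) subset_rfl)

theorem t_countable (p : KCond) : p.t.Countable := by
  have hβ : (Iic p.β).Countable := by
    rw [← Order.Iio_succ]
    exact Ordinal.countable_Iio_of_lt_omega_one ((isSuccLimit_omega 1).succ_lt p.β_lt_omega_one)
  exact (hβ.prod countable_univ).mono p.t_subset_Iic

theorem mk_range_tree_le (hCH : (2 : Cardinal.{1}) ^ ℵ₀ = ℵ₁) : #(range KCond.tree) ≤ ℵ₁ := by
  set N : Set (Ordinal.{0} × ℕ) := Iio ω₁ ×ˢ Set.univ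
  have hN : #N ≤ ℵ₁ := by
    rw [mk_congr (Equiv.Set.prod _ _), mk_prod, Cardinal.mk_Iio_ordinal, mk_univ, mk_nat,
      card_omega, Cardinal.lift_uzero, lift_aleph0, lift_aleph, Ordinal.lift_one]
    exact mul_le_of_le aleph0_lt_aleph_one.le le_rfl aleph0_lt_aleph_one.le
  have hNN : #(N ×ˢ N) ≤ ℵ₁ := by
    rw [mk_setProd]
    exact mul_le_of_le aleph0_lt_aleph_one.le hN hN
  have hrange : range KCond.tree ⊆
      {t | t ⊆ N ∧ t.Countable} ×ˢ {r | r ⊆ N ×ˢ N ∧ r.Countable} := by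
    rintro _ ⟨p, rfl⟩
    have hlt : {z | p.tlt z.1 z.2} ⊆ p.t ×ˢ p.t := fun z hz =>
      ⟨(p.tlt_mem _ _ hz).1, (p.tlt_mem _ _ hz).2.1⟩
    exact ⟨⟨p.t_subset_Iio_omega_one, p.t_countable⟩, hlt.trans (prod_mono p.t_subset_Iio_omega_one
      p.t_subset_Iio_omega_one), (p.t_countable.prod p.t_countable).mono hlt⟩
  calc #(range KCond.tree)
      ≤ #({t | t ⊆ N ∧ t.Countable} ×ˢ {r | r ⊆ N ×ˢ N ∧ r.Countable}) := mk_le_mk_of_subset hrange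
    _ ≤ ℵ₁ := by
      rw [mk_setProd]
      exact mul_le_of_le aleph0_lt_aleph_one.le (mk_countable_subsets_le_of_CH hCH hN)
        (mk_countable_subsets_le_of_CH hCH hNN)

theorem eq_of_tree_eq {p q : KCond} (h : p.tree = q.tree) :
    p.β = q.β ∧ p.t = q.t ∧ p.tlt = q.tlt := by
  have ht : p.t = q.t := congrArg Prod.fst h
  have hlt := congrArg Prod.snd h
  refine ⟨le_antisymm ?_ ?_, ht, ?_⟩
  · obtain ⟨m, hm⟩ := p.level_nonempty p.β le_rfl
    exact q.t_le _ (ht ▸ hm)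
  · obtain ⟨n, hn⟩ := q.level_nonempty q.β le_rfl
    exact p.t_le _ (ht ▸ hn)
  · funext x y
    exact propext (Set.ext_iff.1 hlt (x, y))

theorem le_of_tree_eq {r p : KCond} (hβ : r.β = p.β) (ht : r.t = p.t) (hlt : r.tlt = p.tlt)
    (hdom : p.dom ⊆ r.dom) (hf : ∀ δ ∈ p.dom, r.fmap δ = p.fmap δ) : r.le p := by
  refine ⟨hβ.ge, ?_, fun x y _ _ => hlt ▸ Iff.rfl, hdom, fun δ hδ => Or.inl ?_⟩
  · rw [← ht, eq_comm, sep_eq_self_iff_mem_true]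
    exact fun x hx => hβ ▸ r.t_le x hx
  · rw [hβ, hf δ hδ]

open Classical in
theorem compatible_of_tree_eq {p q : KCond} (h : p.tree = q.tree)
    (hf : ∀ δ ∈ p.dom, δ ∈ q.dom → p.fmap δ = q.fmap δ) : ∃ r : KCond, r.le p ∧ r.le q := by
  obtain ⟨hβ, ht, hlt⟩ := eq_of_tree_eq h
  let r : KCond :=
    { p with
      dom := p.dom ∪ q.dom
      dom_sub := fun δ hδ => hδ.elim (p.dom_sub δ) (q.dom_sub δ)
      dom_countable := p.dom_countable.union q.dom_countable
      fmap := fun δ => if δ ∈ p.dom then p.fmap δ else q.fmap δ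
      fmap_mem := fun δ hδ => by
        by_cases hp : δ ∈ p.dom
        · simpa only [if_pos hp] using p.fmap_mem δ hp
        · simpa only [if_neg hp, hβ, ht] using q.fmap_mem δ (hδ.resolve_left hp)
      fmap_surj := fun n hn => by
        obtain ⟨δ, hδ, rfl⟩ := p.fmap_surj n hn
        exact ⟨δ, Or.inl hδ, if_pos hδ⟩ }
  refine ⟨r, le_of_tree_eq rfl rfl rfl subset_union_left fun δ hδ => if_pos hδ,
    le_of_tree_eq hβ ht hlt subset_union_right fun δ hδ => ?_⟩
  by_cases hp : δ ∈ p.dom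
  · exact (if_pos hp).trans (hf δ hp hδ)
  · exact if_neg hp

end KCond

/-- Assuming CH, the poset for adding a Kurepa tree with `ℵ_{ω₁}` branches satisfies the
`ℵ₂`-chain condition: every antichain has size at most `ℵ₁`. -/
theorem stmt19 (hCH : (2 : Cardinal.{1}) ^ (ℵ₀ : Cardinal.{1}) = aleph 1)
    (A : Set KCond)
    (hA : ∀ p ∈ A, ∀ q ∈ A, p ≠ q → ¬ ∃ r : KCond, r.le p ∧ r.le q) :
    #A ≤ aleph 1 := by
  have hfiber : ∀ k, #{p ∈ A | p.tree = k} ≤ ℵ₁ := fun k =>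
    mk_le_aleph_one_of_pairwise_conflict hCH KCond.dom_countable fun p hp q hq hpq => by
      by_contra! hagree
      exact hA p hp.1 q hq.1 hpq <| KCond.compatible_of_tree_eq (hp.2.trans hq.2.symm)
        fun δ hδp hδq => hagree δ ⟨hδp, hδq⟩
  calc #A ≤ #(⋃ k ∈ range KCond.tree, {p ∈ A | p.tree = k}) :=
        mk_le_mk_of_subset fun p hp => mem_biUnion (mem_range_self p) ⟨hp, rfl⟩
    _ ≤ #(range KCond.tree) * ⨆ k : range KCond.tree, #{p ∈ A | p.tree = k} := mk_biUnion_le _ _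
    _ ≤ ℵ₁ := mul_le_of_le aleph0_lt_aleph_one.le (KCond.mk_range_tree_le hCH)
        (ciSup_le' fun k => hfiber k)
end
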